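/- arXiv:math/0409130 — 8 statements merged into one kernel-verified Lean document; each statement's English description precedes it below -/
import Mathlib

section
/- For an inner product right D-module H_D with H-action, the covariance condition g ▷ ⟨x, y⟩ = ⟨S(g₍₁₎)* ▷ x, g₍₂₎ ▷ y⟩ is equivalent to the condition ⟨x, g ▷ y⟩ = g₍₂₎ ▷ ⟨g₍₁₎* ▷ x, y⟩ for all x, y and g ∈ H. -/
/-!
Substituting one condition into the other turns each side into a double Sweedler sum
`∑ B (g₍₁₎ S(g₍₂₎), g₍₃₎)` (resp. `∑ B (S(g₍₁₎) g₍₂₎, g₍₃₎)`) for a `C`-bilinear `B`;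
coassociativity and the antipode axiom collapse it to `B (1, g)`, which is the other side.
-/

open scoped TensorProduct

/-- A choice of a finite "Sweedler representation" of the comultiplication:
`Δ g = ∑ₚ p.1 ⊗ p.2` where `p` ranges over the list `rep g`. -/
structure SweedlerRep (C H : Type*) [CommSemiring C] [AddCommMonoid H] [Module C H]
    [CoalgebraStruct C H] where
  rep : H → List (H × H)
  rep_spec : ∀ g : H,
    Coalgebra.comul (R := C) g = ((rep g).map fun p => p.1 ⊗ₜ[C] p.2).sum

open Coalgebra TensorProduct

namespace SweedlerRep

section CoalgebraStruct

variable {C H M : Type*} [CommSemiring C] [AddCommMonoid H] [Module C H] [CoalgebraStruct C H]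
  [AddCommMonoid M] [Module C M] (Δ : SweedlerRep C H)

theorem sum_map_tmul (f : H ⊗[C] H →ₗ[C] M) (g : H) :
    ((Δ.rep g).map fun p => f (p.1 ⊗ₜ p.2)).sum = f (comul g) := by
  rw [Δ.rep_spec g, map_list_sum, List.map_map]
  rfl

theorem sum_map_sum_map_tmul_tmul (Φ : H ⊗[C] (H ⊗[C] H) →ₗ[C] M) (g : H) :
    ((Δ.rep g).map fun p => ((Δ.rep p.2).map fun q => Φ (p.1 ⊗ₜ (q.1 ⊗ₜ q.2))).sum).sum
      = Φ (comul.lTensor H (comul g)) := by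
  rw [← LinearMap.comp_apply Φ (comul.lTensor H), ← Δ.sum_map_tmul]
  exact congrArg _ <| List.map_congr_left fun p _ =>
    Δ.sum_map_tmul (Φ ∘ₗ TensorProduct.mk C H _ p.1) p.2

end CoalgebraStruct

section Bialgebra

variable {C H M : Type*} [CommSemiring C] [Semiring H] [Bialgebra C H]
  [AddCommMonoid M] [Module C M] (Δ : SweedlerRep C H)

theorem sum_map_sum_map_of_comp_comul (B : H →ₗ[C] H →ₗ[C] M) (ν : H ⊗[C] H →ₗ[C] H)
    (hν : ν ∘ₗ comul = Algebra.linearMap C H ∘ₗ counit) (g : H) :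
    ((Δ.rep g).map fun p => ((Δ.rep p.2).map fun q => B (ν (p.1 ⊗ₜ q.1)) q.2).sum).sum
      = B 1 g := by
  have hΦ := Δ.sum_map_sum_map_tmul_tmul
    (lift B ∘ₗ ν.rTensor H ∘ₗ (TensorProduct.assoc C H H H).symm.toLinearMap) g
  simp only [LinearMap.comp_apply, LinearEquiv.coe_coe, TensorProduct.assoc_symm_tmul,
    LinearMap.rTensor_tmul, lift.tmul, coassoc_symm_apply] at hΦ
  rw [hΦ, ← LinearMap.comp_apply (ν.rTensor H), ← LinearMap.rTensor_comp, hν,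
    LinearMap.rTensor_comp, LinearMap.comp_apply, rTensor_counit_comul, LinearMap.rTensor_tmul,
    lift.tmul, Algebra.linearMap_apply, map_one]

end Bialgebra

section HopfAlgebra

variable {C H M : Type*} [CommSemiring C] [Semiring H] [HopfAlgebra C H]
  [AddCommMonoid M] [Module C M] (Δ : SweedlerRep C H)

open HopfAlgebra

theorem sum_map_sum_map_mul_antipode (B : H →ₗ[C] H →ₗ[C] M) (g : H) :
    ((Δ.rep g).map fun p =>
      ((Δ.rep p.2).map fun q => B (p.1 * antipode C q.1) q.2).sum).sum = B 1 g :=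
  Δ.sum_map_sum_map_of_comp_comul B (LinearMap.mul' C H ∘ₗ (antipode C).lTensor H)
    mul_antipode_lTensor_comul g

theorem sum_map_sum_map_antipode_mul (B : H →ₗ[C] H →ₗ[C] M) (g : H) :
    ((Δ.rep g).map fun p =>
      ((Δ.rep p.2).map fun q => B (antipode C p.1 * q.1) q.2).sum).sum = B 1 g :=
  Δ.sum_map_sum_map_of_comp_comul B (LinearMap.mul' C H ∘ₗ (antipode C).rTensor H)
    mul_antipode_rTensor_comul g

end HopfAlgebra

end SweedlerRep

section Covariance

open HopfAlgebra

variable {C H D E : Type*} [CommRing C] [StarRing C] [Ring H] [HopfAlgebra C H] [StarRing H]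
  [StarModule C H] [Ring D] [Algebra C D] [AddCommGroup E] [Module C E]

theorem niceCovariance_of_covariance (Δ : SweedlerRep C H) (actD : H → D → D)
    (ip : E → E → D)
    (hip_addl : ∀ x x' y, ip (x + x') y = ip x y + ip x' y)
    (hip_addr : ∀ x y y', ip x (y + y') = ip x y + ip x y')
    (hip_smull : ∀ (c : C) x y, ip (c • x) y = star c • ip x y)
    (hip_smulr : ∀ (c : C) x y, ip x (c • y) = c • ip x y)
    (hE : H → E → E) (hE_one : ∀ x, hE 1 x = x)
    (hE_mulH : ∀ g h x, hE (g * h) x = hE g (hE h x))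
    (hE_lin : ∀ x, IsLinearMap C fun g => hE g x)
    (hcov : ∀ (g : H) (x y : E), actD g (ip x y) =
      ((Δ.rep g).map fun p => ip (hE (star (antipode C p.1)) x) (hE p.2 y)).sum)
    (g : H) (x y : E) :
    ip x (hE g y) = ((Δ.rep g).map fun p => actD p.2 (ip (hE (star p.1) x) y)).sum := by
  -- `u ↦ ⟨u* ▷ x, ·⟩` is linear since `star` and the first slot of `ip` are both antilinear.
  let B : H →ₗ[C] H →ₗ[C] D := LinearMap.mk₂ C (fun u c => ip (hE (star u) x) (hE c y))
    (fun u u' c => by simp only [star_add, (hE_lin x).map_add, hip_addl])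
    (fun r u c => by simp only [star_smul, (hE_lin x).map_smul, hip_smull, star_star])
    (fun u c c' => by simp only [(hE_lin y).map_add, hip_addr])
    (fun r u c => by simp only [(hE_lin y).map_smul, hip_smulr])
  calc ip x (hE g y) = B 1 g := by simp only [B, LinearMap.mk₂_apply, star_one, hE_one]
    _ = ((Δ.rep g).map fun p =>
          ((Δ.rep p.2).map fun q => B (p.1 * antipode C q.1) q.2).sum).sum :=
      (Δ.sum_map_sum_map_mul_antipode B g).symm
    _ = _ := by simp only [B, LinearMap.mk₂_apply, star_mul, hE_mulH, hcov]

theorem covariance_of_niceCovariance (Δ : SweedlerRep C H) (actD : H → D → D)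
    (hactD_lin : ∀ d, IsLinearMap C fun g => actD g d)
    (hactD_linD : ∀ g, IsLinearMap C (actD g))
    (ip : E → E → D)
    (hip_addl : ∀ x x' y, ip (x + x') y = ip x y + ip x' y)
    (hip_smull : ∀ (c : C) x y, ip (c • x) y = star c • ip x y)
    (hE : H → E → E) (hE_one : ∀ x, hE 1 x = x)
    (hE_mulH : ∀ g h x, hE (g * h) x = hE g (hE h x))
    (hE_lin : ∀ x, IsLinearMap C fun g => hE g x)
    (hnice : ∀ (g : H) (x y : E), ip x (hE g y) =
      ((Δ.rep g).map fun p => actD p.2 (ip (hE (star p.1) x) y)).sum)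
    (g : H) (x y : E) :
    actD g (ip x y) =
      ((Δ.rep g).map fun p => ip (hE (star (antipode C p.1)) x) (hE p.2 y)).sum := by
  let B : H →ₗ[C] H →ₗ[C] D := LinearMap.mk₂ C (fun u c => actD c (ip (hE (star u) x) y))
    (fun u u' c => by simp only [star_add, (hE_lin x).map_add, hip_addl, (hactD_linD c).map_add])
    (fun r u c => by
      simp only [star_smul, (hE_lin x).map_smul, hip_smull, star_star, (hactD_linD c).map_smul])
    (fun u c c' => by simp only [(hactD_lin _).map_add])
    (fun r u c => by simp only [(hactD_lin _).map_smul])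
  calc actD g (ip x y) = B 1 g := by simp only [B, LinearMap.mk₂_apply, star_one, hE_one]
    _ = ((Δ.rep g).map fun p =>
          ((Δ.rep p.2).map fun q => B (antipode C p.1 * q.1) q.2).sum).sum :=
      (Δ.sum_map_sum_map_antipode_mul B g).symm
    _ = _ := by simp only [B, LinearMap.mk₂_apply, star_mul, hE_mulH, hnice]

end Covariance

theorem covariance_iff_niceCovariance_general
    {C H D E : Type*} [CommRing C] [StarRing C]
    [Ring H] [HopfAlgebra C H] [StarRing H] [StarModule C H]
    [Ring D] [Algebra C D]
    [AddCommGroup E] [Module C E]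
    (Δ : SweedlerRep C H)
    -- `actD` is a `*`-action of `H` on the `*`-algebra `D`
    (actD : H → D → D)
    (hactD_lin : ∀ d, IsLinearMap C fun g => actD g d)
    (hactD_linD : ∀ g, IsLinearMap C (actD g))
    -- `ip` is a sesquilinear `D`-valued inner product on `E`
    (ip : E → E → D)
    (hip_addl : ∀ x x' y, ip (x + x') y = ip x y + ip x' y)
    (hip_addr : ∀ x y y', ip x (y + y') = ip x y + ip x y')
    (hip_smull : ∀ (c : C) x y, ip (c • x) y = star c • ip x y)
    (hip_smulr : ∀ (c : C) x y, ip x (c • y) = c • ip x y)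
    -- `hE` is an `H`-module structure on `E` ...
    (hE : H → E → E)
    (hE_one : ∀ x, hE 1 x = x)
    (hE_mulH : ∀ g h x, hE (g * h) x = hE g (hE h x))
    (hE_lin : ∀ x, IsLinearMap C fun g => hE g x) :
    -- `g ▷ ⟨x,y⟩ = ⟨S(g₍₁₎)* ▷ x, g₍₂₎ ▷ y⟩`
    (∀ (g : H) (x y : E), actD g (ip x y) =
      ((Δ.rep g).map fun p =>
        ip (hE (star (HopfAlgebra.antipode (R := C) p.1)) x) (hE p.2 y)).sum)
    ↔
    -- `⟨x, g ▷ y⟩ = g₍₂₎ ▷ ⟨g₍₁₎* ▷ x, y⟩`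
    (∀ (g : H) (x y : E), ip x (hE g y) =
      ((Δ.rep g).map fun p => actD p.2 (ip (hE (star p.1) x) y)).sum) :=
  ⟨niceCovariance_of_covariance Δ actD ip hip_addl hip_addr hip_smull hip_smulr hE hE_one hE_mulH
      hE_lin,
    covariance_of_niceCovariance Δ actD hactD_lin hactD_linD ip hip_addl hip_smull hE hE_one
      hE_mulH hE_lin⟩

/-- For an inner product right `D`-module with `H`-action, the covariance
condition `g ▷ ⟨x,y⟩ = ⟨S(g₍₁₎)* ▷ x, g₍₂₎ ▷ y⟩` is equivalent to
`⟨x, g ▷ y⟩ = g₍₂₎ ▷ ⟨g₍₁₎* ▷ x, y⟩`. -/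
theorem covariance_iff_niceCovariance
    {C H D E : Type*} [CommRing C] [StarRing C]
    [Ring H] [HopfAlgebra C H] [StarRing H] [StarModule C H]
    [Ring D] [Algebra C D] [StarRing D] [StarModule C D]
    [AddCommGroup E] [Module C E]
    (Δ : SweedlerRep C H)
    -- Hopf `*`-algebra conditions
    (hcomul_star : ∀ g : H, Coalgebra.comul (R := C) (star g)
      = ((Δ.rep g).map fun p => star p.1 ⊗ₜ[C] star p.2).sum)
    (hcounit_star : ∀ g : H,
      Coalgebra.counit (R := C) (star g) = star (Coalgebra.counit (R := C) g))
    (hS : ∀ g : H,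
      star (HopfAlgebra.antipode (R := C)
        (star (HopfAlgebra.antipode (R := C) g))) = g)
    -- `actD` is a `*`-action of `H` on the `*`-algebra `D`
    (actD : H → D → D)
    (hactD_one : ∀ d, actD 1 d = d)
    (hactD_mulH : ∀ g h d, actD (g * h) d = actD g (actD h d))
    (hactD_lin : ∀ d, IsLinearMap C fun g => actD g d)
    (hactD_linD : ∀ g, IsLinearMap C (actD g))
    (hactD_alg : ∀ g d d', actD g (d * d') =
      ((Δ.rep g).map fun p => actD p.1 d * actD p.2 d').sum)
    (hactD_star : ∀ g d, star (actD g d) =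
      actD (star (HopfAlgebra.antipode (R := C) g)) (star d))
    -- `E` is a right `D`-module via `rmul`
    (rmul : E → D → E)
    (hrmul_one : ∀ x, rmul x 1 = x)
    (hrmul_mul : ∀ x d d', rmul x (d * d') = rmul (rmul x d) d')
    (hrmul_addE : ∀ x x' d, rmul (x + x') d = rmul x d + rmul x' d)
    (hrmul_addD : ∀ x d d', rmul x (d + d') = rmul x d + rmul x d')
    (hrmul_smul : ∀ (c : C) x d, rmul (c • x) d = c • rmul x d)
    (hrmul_smulD : ∀ (c : C) x d, rmul x (c • d) = c • rmul x d)
    -- `ip` is a sesquilinear `D`-valued inner product on `E`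
    (ip : E → E → D)
    (hip_addl : ∀ x x' y, ip (x + x') y = ip x y + ip x' y)
    (hip_addr : ∀ x y y', ip x (y + y') = ip x y + ip x y')
    (hip_smull : ∀ (c : C) x y, ip (c • x) y = star c • ip x y)
    (hip_smulr : ∀ (c : C) x y, ip x (c • y) = c • ip x y)
    (hip_rmul : ∀ x y d, ip x (rmul y d) = ip x y * d)
    (hip_star : ∀ x y, star (ip x y) = ip y x)
    -- `hE` is an `H`-module structure on `E` ...
    (hE : H → E → E)
    (hE_one : ∀ x, hE 1 x = x)
    (hE_mulH : ∀ g h x, hE (g * h) x = hE g (hE h x))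
    (hE_lin : ∀ x, IsLinearMap C fun g => hE g x)
    (hE_linE : ∀ g, IsLinearMap C (hE g))
    -- ... compatible with the right `D`-module structure:
    -- `g ▷ (x·d) = (g₍₁₎ ▷ x)·(g₍₂₎ ▷ d)`
    (hE_compat : ∀ g x d, hE g (rmul x d) =
      ((Δ.rep g).map fun p => rmul (hE p.1 x) (actD p.2 d)).sum) :
    -- `g ▷ ⟨x,y⟩ = ⟨S(g₍₁₎)* ▷ x, g₍₂₎ ▷ y⟩`
    (∀ (g : H) (x y : E), actD g (ip x y) =
      ((Δ.rep g).map fun p =>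
        ip (hE (star (HopfAlgebra.antipode (R := C) p.1)) x) (hE p.2 y)).sum)
    ↔
    -- `⟨x, g ▷ y⟩ = g₍₂₎ ▷ ⟨g₍₁₎* ▷ x, y⟩`
    (∀ (g : H) (x y : E), ip x (hE g y) =
      ((Δ.rep g).map fun p => actD p.2 (ip (hE (star p.1) x) y)).sum) :=
  covariance_iff_niceCovariance_general Δ actD hactD_lin hactD_linD ip hip_addl hip_addr hip_smull
    hip_smulr hE hE_one hE_mulH hE_lin
end

section
/- If the inner product on an inner product right D-module H_D is non-degenerate, then the covariance condition ⟨x, g ▷ y⟩ = g₍₂₎ ▷ ⟨g₍₁₎* ▷ x, y⟩ implies the module compatibility g ▷ (x·d) = (g₍₁₎ ▷ x)·(g₍₂₎ ▷ d). -/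
open scoped TensorProduct

/-- If the inner product on an inner product right `D`-module is
non-degenerate, then the covariance condition `⟨x, g ▷ y⟩ = g₍₂₎ ▷ ⟨g₍₁₎* ▷ x, y⟩`
implies the module compatibility `g ▷ (x·d) = (g₍₁₎ ▷ x)·(g₍₂₎ ▷ d)`. -/
theorem niceCovariance_implies_module_compat
    {C H D E : Type*} [CommRing C] [StarRing C]
    [Ring H] [HopfAlgebra C H] [StarRing H] [StarModule C H]
    [Ring D] [Algebra C D] [StarRing D] [StarModule C D]
    [AddCommGroup E] [Module C E]
    (Δ : SweedlerRep C H)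
    -- Hopf `*`-algebra conditions
    (hcomul_star : ∀ g : H, Coalgebra.comul (R := C) (star g)
      = ((Δ.rep g).map fun p => star p.1 ⊗ₜ[C] star p.2).sum)
    (hcounit_star : ∀ g : H,
      Coalgebra.counit (R := C) (star g) = star (Coalgebra.counit (R := C) g))
    (hS : ∀ g : H,
      star (HopfAlgebra.antipode (R := C)
        (star (HopfAlgebra.antipode (R := C) g))) = g)
    -- `actD` is a `*`-action of `H` on the `*`-algebra `D`
    (actD : H → D → D)
    (hactD_one : ∀ d, actD 1 d = d)
    (hactD_mulH : ∀ g h d, actD (g * h) d = actD g (actD h d))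
    (hactD_lin : ∀ d, IsLinearMap C fun g => actD g d)
    (hactD_linD : ∀ g, IsLinearMap C (actD g))
    (hactD_alg : ∀ g d d', actD g (d * d') =
      ((Δ.rep g).map fun p => actD p.1 d * actD p.2 d').sum)
    (hactD_star : ∀ g d, star (actD g d) =
      actD (star (HopfAlgebra.antipode (R := C) g)) (star d))
    -- `E` is a right `D`-module via `rmul`
    (rmul : E → D → E)
    (hrmul_one : ∀ x, rmul x 1 = x)
    (hrmul_mul : ∀ x d d', rmul x (d * d') = rmul (rmul x d) d')
    (hrmul_addE : ∀ x x' d, rmul (x + x') d = rmul x d + rmul x' d)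
    (hrmul_addD : ∀ x d d', rmul x (d + d') = rmul x d + rmul x d')
    (hrmul_smul : ∀ (c : C) x d, rmul (c • x) d = c • rmul x d)
    (hrmul_smulD : ∀ (c : C) x d, rmul x (c • d) = c • rmul x d)
    -- `ip` is a sesquilinear `D`-valued inner product on `E`
    (ip : E → E → D)
    (hip_addl : ∀ x x' y, ip (x + x') y = ip x y + ip x' y)
    (hip_addr : ∀ x y y', ip x (y + y') = ip x y + ip x y')
    (hip_smull : ∀ (c : C) x y, ip (c • x) y = star c • ip x y)
    (hip_smulr : ∀ (c : C) x y, ip x (c • y) = c • ip x y)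
    (hip_rmul : ∀ x y d, ip x (rmul y d) = ip x y * d)
    (hip_star : ∀ x y, star (ip x y) = ip y x)
    -- `hE` is an `H`-module structure on `E` ...
    (hE : H → E → E)
    (hE_one : ∀ x, hE 1 x = x)
    (hE_mulH : ∀ g h x, hE (g * h) x = hE g (hE h x))
    (hE_lin : ∀ x, IsLinearMap C fun g => hE g x)
    (hE_linE : ∀ g, IsLinearMap C (hE g))
    -- the inner product is non-degenerate
    (hip_nondeg : ∀ x : E, (∀ y : E, ip x y = 0) → x = 0)
    -- the covariance condition `⟨x, g ▷ y⟩ = g₍₂₎ ▷ ⟨g₍₁₎* ▷ x, y⟩`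
    (hcov : ∀ (g : H) (x y : E), ip x (hE g y) =
      ((Δ.rep g).map fun p => actD p.2 (ip (hE (star p.1) x) y)).sum) :
    -- module compatibility `g ▷ (x·d) = (g₍₁₎ ▷ x)·(g₍₂₎ ▷ d)`
    ∀ (g : H) (x : E) (d : D), hE g (rmul x d) =
      ((Δ.rep g).map fun p => rmul (hE p.1 x) (actD p.2 d)).sum := by
  intro g x d
  set R := ((Δ.rep g).map fun p => rmul (hE p.1 x) (actD p.2 d)).sum with hR
  have key : ∀ z : E, ip z (hE g (rmul x d)) = ip z R := by
    intro z
    -- the linear map `a ↦ ⟨a* ▷ z, x⟩`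
    set A : H →ₗ[C] D :=
      { toFun := fun a => ip (hE (star a) z) x
        map_add' := by
          intro a b
          show ip (hE (star (a + b)) z) x = ip (hE (star a) z) x + ip (hE (star b) z) x
          rw [star_add, (hE_lin z).map_add, hip_addl]
        map_smul' := by
          intro c a
          show ip (hE (star (c • a)) z) x = c • ip (hE (star a) z) x
          rw [star_smul, (hE_lin z).map_smul, hip_smull, star_star] } with hA
    set ev : H ⊗[C] H →ₗ[C] D :=
      TensorProduct.lift (LinearMap.mk₂ C (fun a b => actD b (A a))
        (fun a a' b => by
          show actD b (A (a + a')) = actD b (A a) + actD b (A a')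
          rw [map_add, (hactD_linD b).map_add])
        (fun c a b => by
          show actD b (A (c • a)) = c • actD b (A a)
          rw [map_smul, (hactD_linD b).map_smul])
        (fun a b b' => (hactD_lin (A a)).map_add b b')
        (fun c a b => (hactD_lin (A a)).map_smul c b)) with hev
    set Bd : H →ₗ[C] D :=
      { toFun := fun c => actD c d
        map_add' := (hactD_lin d).map_add
        map_smul' := (hactD_lin d).map_smul } with hBd
    set G2 : (H ⊗[C] H) ⊗[C] H →ₗ[C] D :=
      (LinearMap.mul' C D) ∘ₗ TensorProduct.map ev Bd with hG2
    set G3 : H ⊗[C] (H ⊗[C] H) →ₗ[C] D :=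
      G2 ∘ₗ (TensorProduct.assoc C H H H).symm.toLinearMap with hG3
    have hG3_tmul : ∀ a b c : H, G3 (a ⊗ₜ[C] (b ⊗ₜ[C] c)) = actD b (A a) * actD c d := by
      intro a b c
      simp [hG3, hG2, hev, hBd, TensorProduct.assoc_symm_tmul, LinearMap.mul'_apply]
    have hG2_tmul : ∀ a b c : H, G2 ((a ⊗ₜ[C] b) ⊗ₜ[C] c) = actD b (A a) * actD c d := by
      intro a b c
      simp [hG2, hev, hBd, LinearMap.mul'_apply]
    -- LHS
    have lhs_eq : ip z (hE g (rmul x d)) =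
        G3 ((Coalgebra.comul (R := C)).lTensor H (Coalgebra.comul (R := C) g)) := by
      rw [hcov, Δ.rep_spec g, map_list_sum, map_list_sum, List.map_map, List.map_map]
      refine congrArg List.sum (List.map_congr_left fun p _ => ?_)
      simp only [Function.comp_apply, LinearMap.lTensor_tmul]
      rw [hip_rmul, hactD_alg, Δ.rep_spec p.2]
      have : G3 (p.1 ⊗ₜ[C] ((Δ.rep p.2).map fun q => q.1 ⊗ₜ[C] q.2).sum) =
          (G3 ∘ₗ TensorProduct.mk C H (H ⊗[C] H) p.1)
            (((Δ.rep p.2).map fun q => q.1 ⊗ₜ[C] q.2).sum) := rfl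
      rw [this, map_list_sum, List.map_map]
      refine congrArg List.sum (List.map_congr_left fun q _ => ?_)
      simpa [hA] using (hG3_tmul p.1 q.1 q.2).symm
    -- RHS
    have ipz : ∀ (l : List E), ip z l.sum = (l.map (ip z)).sum := by
      intro l
      exact map_list_sum
        ({ toFun := ip z
           map_zero' := by
             have := hip_smulr (0 : C) z (0 : E)
             simpa using this
           map_add' := fun a b => hip_addr z a b } : E →+ D) l
    have rhs_eq : ip z R =
        G2 ((Coalgebra.comul (R := C)).rTensor H (Coalgebra.comul (R := C) g)) := by
      rw [hR, ipz, List.map_map, Δ.rep_spec g, map_list_sum, map_list_sum,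
        List.map_map, List.map_map]
      refine congrArg List.sum (List.map_congr_left fun p _ => ?_)
      simp only [Function.comp_apply, LinearMap.rTensor_tmul]
      rw [hip_rmul, hcov, Δ.rep_spec p.1]
      have h1 : G2 ((((Δ.rep p.1).map fun q => q.1 ⊗ₜ[C] q.2).sum) ⊗ₜ[C] p.2) =
          (G2 ∘ₗ (TensorProduct.mk C (H ⊗[C] H) H).flip p.2)
            (((Δ.rep p.1).map fun q => q.1 ⊗ₜ[C] q.2).sum) := rfl
      rw [h1, map_list_sum, List.map_map]
      have h2 : (((Δ.rep p.1).map fun q => actD q.2 (ip (hE (star q.1) z) x)).sum) * actD p.2 d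
          = ((Δ.rep p.1).map fun q => actD q.2 (ip (hE (star q.1) z) x) * actD p.2 d).sum := by
        rw [show (((Δ.rep p.1).map fun q => actD q.2 (ip (hE (star q.1) z) x)).sum) * actD p.2 d
            = (AddMonoidHom.mulRight (actD p.2 d))
              (((Δ.rep p.1).map fun q => actD q.2 (ip (hE (star q.1) z) x)).sum) from rfl,
          map_list_sum, List.map_map]
        rfl
      rw [h2]
      refine congrArg List.sum (List.map_congr_left fun q _ => ?_)
      simpa [hA] using (hG2_tmul q.1 q.2 p.2).symm
    rw [lhs_eq, rhs_eq]
    have := Coalgebra.coassoc_symm_apply (R := C) g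
    calc G3 ((Coalgebra.comul (R := C)).lTensor H (Coalgebra.comul (R := C) g))
        = G2 ((TensorProduct.assoc C H H H).symm
            ((Coalgebra.comul (R := C)).lTensor H (Coalgebra.comul (R := C) g))) := rfl
      _ = G2 ((Coalgebra.comul (R := C)).rTensor H (Coalgebra.comul (R := C) g)) := by
          rw [this]
  -- conclude by non-degeneracy
  have hw : hE g (rmul x d) - R = 0 := by
    apply hip_nondeg
    intro y
    have h1 : ∀ y', ip y' (hE g (rmul x d) - R) = 0 := by
      intro y'
      have hneg : ip y' (-R) = - ip y' R := by
        have := hip_smulr (-1 : C) y' R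
        simpa [neg_one_smul] using this
      rw [sub_eq_add_neg, hip_addr, hneg, key y', add_neg_cancel]
    have := hip_star y (hE g (rmul x d) - R)
    rw [← this, h1 y, star_zero]
  exact sub_eq_zero.mp hw
end

section
/- On an H-covariant inner product D-module, the formula (g ▷ A)(x) = g₍₁₎ ▷ (A(S(g₍₂₎) ▷ x)) defines a *-action of H on the *-algebra B(H_D) of adjointable operators: for adjointable A, the operator g ▷ A is again adjointable with adjoint (g ▷ A)* = S(g)* ▷ A*. -/
namespace AdjAux

open TensorProduct Coalgebra HopfAlgebra LinearMap


variable {R A : Type*} [CommSemiring R] [Semiring A] [HopfAlgebra R A]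

section ConvL
variable {L : Type*} [Semiring L] [Algebra R L]

noncomputable def conv (f g : A →ₗ[R] L) : A →ₗ[R] L :=
  LinearMap.mul' R L ∘ₗ TensorProduct.map f g ∘ₗ Coalgebra.comul

noncomputable def convOne : A →ₗ[R] L := (Algebra.linearMap R L) ∘ₗ Coalgebra.counit

lemma conv_convOne (f : A →ₗ[R] L) : conv f convOne = f := by
  unfold conv convOne
  have h1 : TensorProduct.map f ((Algebra.linearMap R L) ∘ₗ Coalgebra.counit)
      = TensorProduct.map f (Algebra.linearMap R L) ∘ₗ (Coalgebra.counit (R := R) (A := A)).lTensor A := by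
    rw [lTensor, ← TensorProduct.map_comp, LinearMap.comp_id]
  rw [h1]
  ext x
  simp only [LinearMap.comp_apply]
  rw [show (Coalgebra.counit.lTensor A) (Coalgebra.comul (R := R) x) = x ⊗ₜ[R] 1 from
    Coalgebra.lTensor_counit_comul x]
  simp

lemma convOne_conv (f : A →ₗ[R] L) : conv convOne f = f := by
  unfold conv convOne
  have h1 : TensorProduct.map ((Algebra.linearMap R L) ∘ₗ Coalgebra.counit) f
      = TensorProduct.map (Algebra.linearMap R L) f ∘ₗ (Coalgebra.counit (R := R) (A := A)).rTensor A := by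
    rw [rTensor, ← TensorProduct.map_comp, LinearMap.comp_id]
  rw [h1]
  ext x
  simp only [LinearMap.comp_apply]
  rw [show (Coalgebra.counit.rTensor A) (Coalgebra.comul (R := R) x) = 1 ⊗ₜ[R] x from
    Coalgebra.rTensor_counit_comul x]
  simp

lemma conv_assoc (f g h : A →ₗ[R] L) : conv (conv f g) h = conv f (conv g h) := by
  have e1 : TensorProduct.map (LinearMap.mul' R L ∘ₗ TensorProduct.map f g ∘ₗ Coalgebra.comul) h
      = (LinearMap.mul' R L).rTensor L ∘ₗ TensorProduct.map (TensorProduct.map f g) h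
          ∘ₗ (Coalgebra.comul (R := R) (A := A)).rTensor A := by
    rw [rTensor, rTensor, ← TensorProduct.map_comp, ← TensorProduct.map_comp,
      LinearMap.comp_id, LinearMap.id_comp]
  have e2 : TensorProduct.map f (LinearMap.mul' R L ∘ₗ TensorProduct.map g h ∘ₗ Coalgebra.comul)
      = (LinearMap.mul' R L).lTensor L ∘ₗ TensorProduct.map f (TensorProduct.map g h)
          ∘ₗ (Coalgebra.comul (R := R) (A := A)).lTensor A := by
    rw [lTensor, lTensor, ← TensorProduct.map_comp, ← TensorProduct.map_comp,
      LinearMap.comp_id, LinearMap.id_comp]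
  have b1 : (LinearMap.mul' R L) ∘ₗ (LinearMap.mul' R L).rTensor L
      = ((LinearMap.mul' R L) ∘ₗ (LinearMap.mul' R L).lTensor L)
          ∘ₗ (TensorProduct.assoc R L L L).toLinearMap := by
    apply TensorProduct.ext_threefold; intro a b c; simp [mul_assoc]
  have n1 : (TensorProduct.assoc R L L L).toLinearMap
        ∘ₗ TensorProduct.map (TensorProduct.map f g) h
      = TensorProduct.map f (TensorProduct.map g h)
          ∘ₗ (TensorProduct.assoc R A A A).toLinearMap := by
    apply TensorProduct.ext_threefold; intro a b c; simp
  ext x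
  simp only [conv]
  simp only [LinearMap.comp_apply]
  rw [e1, e2]
  simp only [LinearMap.comp_apply]
  rw [← Coalgebra.coassoc_apply (R := R) x]
  have hn := LinearMap.congr_fun n1 ((Coalgebra.comul (R := R)).rTensor A
    (Coalgebra.comul (R := R) x))
  simp only [LinearMap.comp_apply, LinearEquiv.coe_coe] at hn
  rw [← hn]
  have hb := LinearMap.congr_fun b1 (TensorProduct.map (TensorProduct.map f g) h
    ((Coalgebra.comul (R := R)).rTensor A (Coalgebra.comul (R := R) x)))
  simp only [LinearMap.comp_apply, LinearEquiv.coe_coe] at hb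
  rw [← hb]


end ConvL

/-- `conv (comul ∘ antipode) comul = convOne` -/
lemma conv_comulAntipode_comul :
    conv (Coalgebra.comul ∘ₗ (antipode (R := R) (A := A))) Coalgebra.comul
      = convOne (R := R) (A := A) (L := A ⊗[R] A) := by
  have e : TensorProduct.map ((Coalgebra.comul (R := R) (A := A)) ∘ₗ antipode (R := R))
        (Coalgebra.comul (R := R) (A := A))
      = TensorProduct.map Coalgebra.comul Coalgebra.comul
          ∘ₗ (antipode (R := R) (A := A)).rTensor A := by
    rw [rTensor, ← TensorProduct.map_comp, LinearMap.comp_id]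
  have key : (LinearMap.mul' R (A ⊗[R] A)) ∘ₗ
        TensorProduct.map (Coalgebra.comul (R := R) (A := A)) Coalgebra.comul
      = Coalgebra.comul ∘ₗ LinearMap.mul' R A := by
    apply TensorProduct.ext'; intro a b
    simp
  ext x
  simp only [conv, convOne, LinearMap.comp_apply]
  rw [e]
  simp only [LinearMap.comp_apply]
  have hk := LinearMap.congr_fun key ((antipode (R := R)).rTensor A (Coalgebra.comul x))
  simp only [LinearMap.comp_apply] at hk
  rw [hk, mul_antipode_rTensor_comul_apply]
  simp

/-- the candidate anti-comultiplication `g ↦ ∑ S g₂ ⊗ S g₁` -/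
noncomputable def acm : A →ₗ[R] A ⊗[R] A :=
  (TensorProduct.comm R A A).toLinearMap
    ∘ₗ TensorProduct.map (antipode (R := R)) (antipode (R := R)) ∘ₗ Coalgebra.comul

lemma conv_comul_acm :
    (LinearMap.mul' R (A ⊗[R] A)) ∘ₗ
      TensorProduct.map (Coalgebra.comul (R := R) (A := A)) (acm (R := R) (A := A))
        ∘ₗ Coalgebra.comul
      = (Algebra.linearMap R (A ⊗[R] A)) ∘ₗ Coalgebra.counit := by
  set S := (antipode (R := R) (A := A)) with hSdef
  set Δ := (Coalgebra.comul (R := R) (A := A)) with hΔdef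
  set γ : A ⊗[R] A →ₗ[R] A ⊗[R] A :=
    (TensorProduct.comm R A A).toLinearMap ∘ₗ TensorProduct.map S S with hγ
  set ν : A ⊗[R] A →ₗ[R] A := LinearMap.mul' R A ∘ₗ S.lTensor A with hν
  -- N : A ⊗ (A ⊗ A) → A ⊗ A,  a ⊗ (m ⊗ d) ↦ (a * S d) ⊗ m
  set N : A ⊗[R] (A ⊗[R] A) →ₗ[R] A ⊗[R] A :=
    (ν.rTensor A) ∘ₗ (TensorProduct.assoc R A A A).symm.toLinearMap
      ∘ₗ ((TensorProduct.comm R A A).toLinearMap.lTensor A) with hN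
  have hNapp : ∀ (a m d : A), N (a ⊗ₜ[R] (m ⊗ₜ[R] d)) = (a * S d) ⊗ₜ[R] m := by
    intro a m d
    simp [hN, hν]
  -- (1) decompose map Δ (γ ∘ Δ)
  have e1 : TensorProduct.map Δ (acm (R := R) (A := A))
      = (γ.lTensor (A ⊗[R] A)) ∘ₗ (Δ.lTensor (A ⊗[R] A)) ∘ₗ (Δ.rTensor A) := by
    ext a b
    simp [acm, hγ, hΔdef, hSdef]
  -- (3) naturality
  have N3 : Δ.lTensor (A ⊗[R] A) ∘ₗ (TensorProduct.assoc R A A A).symm.toLinearMap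
      = (TensorProduct.assoc R A A (A ⊗[R] A)).symm.toLinearMap
          ∘ₗ ((Δ.lTensor A).lTensor A) := by
    ext a b c
    simp
  -- (5) collapse claim C4
  have C4 : (LinearMap.mul' R (A ⊗[R] A)) ∘ₗ γ.lTensor (A ⊗[R] A)
        ∘ₗ (TensorProduct.assoc R A A (A ⊗[R] A)).symm.toLinearMap
        ∘ₗ ((TensorProduct.assoc R A A A).toLinearMap.lTensor A)
      = N ∘ₗ ((ν.rTensor A).lTensor A) := by
    ext a u v d
    simp [hγ, hν, hN, Algebra.TensorProduct.tmul_mul_tmul]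
  -- (8) final collapse C5
  have C5 : N ∘ₗ ((Algebra.linearMap R A).rTensor A).lTensor A
        ∘ₗ ((TensorProduct.mk R R A 1).lTensor A)
      = ((TensorProduct.mk R A A).flip 1) ∘ₗ ν := by
    ext a b
    simp [hNapp, hν]
  -- now the pointwise chain
  ext x
  simp only [LinearMap.comp_apply]
  rw [e1]
  simp only [LinearMap.comp_apply]
  rw [Coalgebra.coassoc_symm_apply x |>.symm]
  have h3 := LinearMap.congr_fun N3 (Δ.lTensor A (Δ x))
  simp only [LinearMap.comp_apply, LinearEquiv.coe_coe] at h3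
  rw [h3]
  -- rewrite (Δ.lTensor A).lTensor A (Δ.lTensor A (Δ x)) using coassoc inside lTensor
  have h4 : (Δ.lTensor A).lTensor A ((Δ.lTensor A) (Δ x))
      = ((TensorProduct.assoc R A A A).toLinearMap.lTensor A)
          (((Δ.rTensor A).lTensor A) ((Δ.lTensor A) (Δ x))) := by
    rw [← LinearMap.lTensor_comp_apply, ← LinearMap.lTensor_comp_apply,
        ← LinearMap.lTensor_comp_apply]
    congr 1
    rw [← Coalgebra.coassoc (R := R) (A := A)]
    rfl
  rw [h4]
  have h5 := LinearMap.congr_fun C4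
    (((Δ.rTensor A).lTensor A) ((Δ.lTensor A) (Δ x)))
  simp only [LinearMap.comp_apply, LinearEquiv.coe_coe] at h5
  rw [h5]
  have hνΔ : ν ∘ₗ Δ = (Algebra.linearMap R A) ∘ₗ Coalgebra.counit := by
    rw [hν, LinearMap.comp_assoc]
    exact mul_antipode_lTensor_comul
  have h6 : ((ν.rTensor A).lTensor A) (((Δ.rTensor A).lTensor A) ((Δ.lTensor A) (Δ x)))
      = (((Algebra.linearMap R A).rTensor A).lTensor A)
          (((Coalgebra.counit (R := R) (A := A)).rTensor A).lTensor A ((Δ.lTensor A) (Δ x))) := by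
    rw [← LinearMap.lTensor_comp_apply, ← LinearMap.rTensor_comp, hνΔ,
      LinearMap.rTensor_comp, LinearMap.lTensor_comp_apply]
  rw [h6]
  have h7 : (((Coalgebra.counit (R := R) (A := A)).rTensor A).lTensor A) ((Δ.lTensor A) (Δ x))
      = (TensorProduct.mk R R A 1).lTensor A (Δ x) := by
    rw [← LinearMap.lTensor_comp_apply,
      show ((Coalgebra.counit (R := R) (A := A)).rTensor A) ∘ₗ Δ = TensorProduct.mk R R A 1 from
        Coalgebra.rTensor_counit_comp_comul]
  rw [h7]
  have h8 := LinearMap.congr_fun C5 (Δ x)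
  simp only [LinearMap.comp_apply] at h8
  rw [h8]
  have h9 : ν (Δ x) = algebraMap R A (Coalgebra.counit (R := R) x) := by
    rw [hν]
    simp only [LinearMap.comp_apply]
    exact mul_antipode_lTensor_comul_apply (R := R) x
  rw [h9]
  simp [Algebra.TensorProduct.algebraMap_apply]


theorem comul_comp_antipode :
    Coalgebra.comul ∘ₗ (antipode (R := R) (A := A)) = acm (R := R) (A := A) := by
  have h2 : conv (Coalgebra.comul (R := R) (A := A)) (acm (R := R) (A := A)) = convOne := by
    unfold conv convOne
    exact conv_comul_acm
  have h1 : conv (Coalgebra.comul ∘ₗ (antipode (R := R) (A := A))) Coalgebra.comul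
      = convOne := conv_comulAntipode_comul
  calc Coalgebra.comul ∘ₗ (antipode (R := R) (A := A))
      = conv (Coalgebra.comul ∘ₗ (antipode (R := R) (A := A))) convOne := by
        rw [conv_convOne]
    _ = conv (Coalgebra.comul ∘ₗ (antipode (R := R) (A := A)))
          (conv Coalgebra.comul (acm (R := R) (A := A))) := by rw [h2]
    _ = conv (conv (Coalgebra.comul ∘ₗ (antipode (R := R) (A := A))) Coalgebra.comul)
          (acm (R := R) (A := A)) := (conv_assoc _ _ _).symm
    _ = conv convOne (acm (R := R) (A := A)) := by rw [h1]
    _ = acm (R := R) (A := A) := convOne_conv _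

theorem comul_antipode_apply (a : A) :
    Coalgebra.comul (R := R) ((antipode (R := R)) a)
      = (TensorProduct.comm R A A)
          (TensorProduct.map (antipode (R := R)) (antipode (R := R))
            (Coalgebra.comul (R := R) a)) := by
  have := LinearMap.congr_fun (comul_comp_antipode (R := R) (A := A)) a
  simpa [acm] using this

end AdjAux

namespace AdjAux

open TensorProduct Coalgebra HopfAlgebra LinearMap


lemma map_listsum {M N F : Type*} [AddCommMonoid M] [AddCommMonoid N] [FunLike F M N]
    [AddMonoidHomClass F M N] (φ : F) {α : Type*} (l : List α) (f : α → M) :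
    φ (l.map f).sum = (l.map fun a => φ (f a)).sum := by
  rw [map_list_sum, List.map_map]; rfl

lemma list_sum_tmul {C M N : Type*} [CommSemiring C] [AddCommMonoid M] [AddCommMonoid N]
    [Module C M] [Module C N] {α : Type*} (l : List α) (f : α → M) (c : N) :
    ((l.map f).sum) ⊗ₜ[C] c = (l.map fun a => f a ⊗ₜ[C] c).sum := by
  simpa using map_listsum ((TensorProduct.mk C M N).flip c) l f

lemma tmul_list_sum {C M N : Type*} [CommSemiring C] [AddCommMonoid M] [AddCommMonoid N]
    [Module C M] [Module C N] {α : Type*} (l : List α) (f : α → N) (c : M) :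
    c ⊗ₜ[C] ((l.map f).sum) = (l.map fun a => c ⊗ₜ[C] f a).sum := by
  simpa using map_listsum ((TensorProduct.mk C M N) c) l f

section Lifts
variable {C H M : Type*} [CommSemiring C] [AddCommGroup H] [Module C H] [AddCommGroup M]

/-- Lift of a balanced bi-additive map to the tensor product. -/
noncomputable def liftB (B : H → H → M)
    (h1 : ∀ a a' b, B (a + a') b = B a b + B a' b)
    (h2 : ∀ a b b', B a (b + b') = B a b + B a b')
    (hbal : ∀ (c : C) (a b : H), B (c • a) b = B a (c • b)) :
    H ⊗[C] H →+ M :=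
  TensorProduct.liftAddHom
    (AddMonoidHom.mk' (fun a => AddMonoidHom.mk' (fun b => B a b) (h2 a))
      (fun a a' => by ext b; exact h1 a a' b))
    (fun c a b => hbal c a b)

@[simp] lemma liftB_tmul (B : H → H → M) (h1 h2 hbal) (a b : H) :
    liftB (C := C) B h1 h2 hbal (a ⊗ₜ[C] b) = B a b := by
  rfl

/-- Lift of a balanced tri-additive map to the iterated tensor product. -/
noncomputable def liftB3 (B : H → H → H → M)
    (h1 : ∀ a a' b d, B (a + a') b d = B a b d + B a' b d)
    (h2 : ∀ a b b' d, B a (b + b') d = B a b d + B a b' d)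
    (h3 : ∀ a b d d', B a b (d + d') = B a b d + B a b d')
    (b12 : ∀ (c : C) a b d, B (c • a) b d = B a (c • b) d)
    (b23 : ∀ (c : C) a b d, B a (c • b) d = B a b (c • d)) :
    H ⊗[C] (H ⊗[C] H) →+ M := by
  refine TensorProduct.liftAddHom
    (AddMonoidHom.mk' (fun a => liftB (C := C) (B a) (h2 a) (h3 a) (b23 · a)) ?_) ?_
  · intro a a'
    ext t
    induction t using TensorProduct.induction_on with
    | zero => simp
    | tmul b d => simp [h1]
    | add s t hs ht =>
        simp only [map_add, hs, ht, AddMonoidHom.add_apply]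
        try abel
  · intro c a t
    induction t using TensorProduct.induction_on with
    | zero => simp
    | tmul b d =>
        simp only [AddMonoidHom.mk'_apply, TensorProduct.smul_tmul', liftB_tmul]
        exact b12 c a b d
    | add s t hs ht => simp only [smul_add, map_add, hs, ht]

@[simp] lemma liftB3_tmul (B : H → H → H → M) (h1 h2 h3 b12 b23) (a b d : H) :
    liftB3 (C := C) B h1 h2 h3 b12 b23 (a ⊗ₜ[C] (b ⊗ₜ[C] d)) = B a b d := by
  simp [liftB3]

end Lifts

end AdjAux



open scoped TensorProduct

set_option maxHeartbeats 2000000 in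
/-- On an `H`-covariant inner product `D`-module, the formula
`(g ▷ A)(x) = g₍₁₎ ▷ (A(S(g₍₂₎) ▷ x))` defines a `*`-action of `H` on the adjointable
operators: if `A` is adjointable with adjoint `A*`, then `g ▷ A` is again adjointable
with adjoint `(g ▷ A)* = S(g)* ▷ A*`. -/
theorem adjoint_of_inducedAction
    {C H D E : Type*} [CommRing C] [StarRing C]
    [Ring H] [HopfAlgebra C H] [StarRing H] [StarModule C H]
    [Ring D] [Algebra C D] [StarRing D] [StarModule C D]
    [AddCommGroup E] [Module C E]
    (Δ : SweedlerRep C H)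
    -- Hopf `*`-algebra conditions
    (hcomul_star : ∀ g : H, Coalgebra.comul (R := C) (star g)
      = ((Δ.rep g).map fun p => star p.1 ⊗ₜ[C] star p.2).sum)
    (hcounit_star : ∀ g : H,
      Coalgebra.counit (R := C) (star g) = star (Coalgebra.counit (R := C) g))
    (hS : ∀ g : H,
      star (HopfAlgebra.antipode (R := C)
        (star (HopfAlgebra.antipode (R := C) g))) = g)
    -- `actD` is a `*`-action of `H` on the `*`-algebra `D`
    (actD : H → D → D)
    (hactD_one : ∀ d, actD 1 d = d)
    (hactD_mulH : ∀ g h d, actD (g * h) d = actD g (actD h d))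
    (hactD_lin : ∀ d, IsLinearMap C fun g => actD g d)
    (hactD_linD : ∀ g, IsLinearMap C (actD g))
    (hactD_alg : ∀ g d d', actD g (d * d') =
      ((Δ.rep g).map fun p => actD p.1 d * actD p.2 d').sum)
    (hactD_star : ∀ g d, star (actD g d) =
      actD (star (HopfAlgebra.antipode (R := C) g)) (star d))
    -- `E` is a right `D`-module via `rmul`
    (rmul : E → D → E)
    (hrmul_one : ∀ x, rmul x 1 = x)
    (hrmul_mul : ∀ x d d', rmul x (d * d') = rmul (rmul x d) d')
    (hrmul_addE : ∀ x x' d, rmul (x + x') d = rmul x d + rmul x' d)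
    (hrmul_addD : ∀ x d d', rmul x (d + d') = rmul x d + rmul x d')
    (hrmul_smul : ∀ (c : C) x d, rmul (c • x) d = c • rmul x d)
    (hrmul_smulD : ∀ (c : C) x d, rmul x (c • d) = c • rmul x d)
    -- `ip` is a sesquilinear `D`-valued inner product on `E`
    (ip : E → E → D)
    (hip_addl : ∀ x x' y, ip (x + x') y = ip x y + ip x' y)
    (hip_addr : ∀ x y y', ip x (y + y') = ip x y + ip x y')
    (hip_smull : ∀ (c : C) x y, ip (c • x) y = star c • ip x y)
    (hip_smulr : ∀ (c : C) x y, ip x (c • y) = c • ip x y)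
    (hip_rmul : ∀ x y d, ip x (rmul y d) = ip x y * d)
    (hip_star : ∀ x y, star (ip x y) = ip y x)
    -- `hE` is an `H`-module structure on `E` ...
    (hE : H → E → E)
    (hE_one : ∀ x, hE 1 x = x)
    (hE_mulH : ∀ g h x, hE (g * h) x = hE g (hE h x))
    (hE_lin : ∀ x, IsLinearMap C fun g => hE g x)
    (hE_linE : ∀ g, IsLinearMap C (hE g))
    -- ... compatible with the right `D`-module structure
    (hE_compat : ∀ g x d, hE g (rmul x d) =
      ((Δ.rep g).map fun p => rmul (hE p.1 x) (actD p.2 d)).sum)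
    -- the inner product is non-degenerate and `H`-covariant:
    -- `g ▷ ⟨x,y⟩ = ⟨S(g₍₁₎)* ▷ x, g₍₂₎ ▷ y⟩`
    (hip_nondeg : ∀ x : E, (∀ y : E, ip x y = 0) → x = 0)
    (hcov : ∀ (g : H) (x y : E), actD g (ip x y) =
      ((Δ.rep g).map fun p =>
        ip (hE (star (HopfAlgebra.antipode (R := C) p.1)) x) (hE p.2 y)).sum)
    -- `T` is an adjointable operator with adjoint `T'`
    (T T' : E → E)
    (hT : ∀ x y : E, ip (T x) y = ip x (T' y)) :
    -- `g ▷ T` is adjointable with adjoint `S(g)* ▷ T'`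
    ∀ (g : H) (x y : E),
      ip (((Δ.rep g).map fun p =>
            hE p.1 (T (hE (HopfAlgebra.antipode (R := C) p.2) x))).sum) y
      = ip x (((Δ.rep (star (HopfAlgebra.antipode (R := C) g))).map fun q =>
            hE q.1 (T' (hE (HopfAlgebra.antipode (R := C) q.2) y))).sum) := by
  
  intro g x y
  have hκκ : ∀ h : H, star (HopfAlgebra.antipode (R := C) (star (HopfAlgebra.antipode (R := C) h))) = h := hS
  have hSκ : ∀ h : H, HopfAlgebra.antipode (R := C) (star (HopfAlgebra.antipode (R := C) h)) = star h := by
    intro h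
    have h1 := congrArg star (hS h)
    rwa [star_star] at h1
  have hEadd : ∀ (a a' : H) (z : E), hE (a + a') z = hE a z + hE a' z :=
    fun a a' z => (hE_lin z).map_add a a'
  have hEsmul : ∀ (c : C) (a : H) (z : E), hE (c • a) z = c • hE a z :=
    fun c a z => (hE_lin z).map_smul c a
  have ip0r : ∀ z : E, ip z 0 = 0 := by
    intro z
    have h1 := hip_addr z 0 0
    rw [add_zero] at h1
    exact (left_eq_add.mp h1)
  have ip0l : ∀ z : E, ip 0 z = 0 := by
    intro z
    have h1 := hip_addl 0 0 z
    rw [add_zero] at h1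
    exact (left_eq_add.mp h1)
  have ipsubr : ∀ (z a b : E), ip z (a - b) = ip z a - ip z b := by
    intro z a b
    have h1 := hip_addr z (a - b) b
    rw [sub_add_cancel] at h1
    exact eq_sub_of_add_eq h1.symm
  have T'add : ∀ m n : E, T' (m + n) = T' m + T' n := by
    intro m n
    have key : ∀ z : E, ip (T' (m + n) - (T' m + T' n)) z = 0 := by
      intro z
      have h1 : ip z (T' (m + n)) = ip z (T' m + T' n) := by
        rw [← hT, hip_addr, hT, hT, ← hip_addr]
      have h2 : ip z (T' (m + n) - (T' m + T' n)) = 0 := by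
        rw [ipsubr, h1, sub_self]
      have h3 := hip_star z (T' (m + n) - (T' m + T' n))
      rw [h2] at h3
      simpa using h3.symm
    exact sub_eq_zero.mp (hip_nondeg _ key)
  have T'smul : ∀ (c : C) (m : E), T' (c • m) = c • T' m := by
    intro c m
    have key : ∀ z : E, ip (T' (c • m) - c • T' m) z = 0 := by
      intro z
      have h1 : ip z (T' (c • m)) = ip z (c • T' m) := by
        rw [← hT, hip_smulr, hT, ← hip_smulr]
      have h2 : ip z (T' (c • m) - c • T' m) = 0 := by
        rw [ipsubr, h1, sub_self]
      have h3 := hip_star z (T' (c • m) - c • T' m)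
      rw [h2] at h3
      simpa using h3.symm
    exact sub_eq_zero.mp (hip_nondeg _ key)
  have ipsuml : ∀ (l : List (H × H)) (f : H × H → E),
      ip ((l.map f).sum) y = (l.map fun p => ip (f p) y).sum := by
    intro l f
    induction l with
    | nil => simpa using ip0l y
    | cons a t ih => simp [hip_addl, ih]
  have ipsumr : ∀ (l : List (H × H)) (f : H × H → E),
      ip x ((l.map f).sum) = (l.map fun p => ip x (f p)).sum := by
    intro l f
    induction l with
    | nil => simpa using ip0r x
    | cons a t ih => simp [hip_addr, ih]

  have K1t : ∀ h : H,
      ((Δ.rep h).map fun p => ((Δ.rep p.1).map fun q =>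
          q.1 ⊗ₜ[C] (q.2 * HopfAlgebra.antipode (R := C) p.2)).sum).sum
        = h ⊗ₜ[C] (1 : H) := by
    intro h
    set Bmap : H ⊗[C] H →ₗ[C] H ⊗[C] H :=
      (LinearMap.mul' C H).lTensor H ∘ₗ (TensorProduct.assoc C H H H).toLinearMap
        ∘ₗ TensorProduct.map (Coalgebra.comul (R := C)) (HopfAlgebra.antipode (R := C))
        with hBmap
    have stepA : ∀ p : H × H, Bmap (p.1 ⊗ₜ[C] p.2)
        = ((Δ.rep p.1).map fun q =>
            q.1 ⊗ₜ[C] (q.2 * HopfAlgebra.antipode (R := C) p.2)).sum := by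
      intro p
      rw [hBmap]
      simp only [LinearMap.comp_apply, TensorProduct.map_tmul]
      rw [Δ.rep_spec p.1, AdjAux.list_sum_tmul, AdjAux.map_listsum, AdjAux.map_listsum]
      simp [List.map_map, Function.comp]
    have stepC : Bmap (Coalgebra.comul (R := C) h) = h ⊗ₜ[C] (1 : H) := by
      have e : TensorProduct.map (Coalgebra.comul (R := C) (A := H))
            (HopfAlgebra.antipode (R := C))
          = ((HopfAlgebra.antipode (R := C) (A := H)).lTensor (H ⊗[C] H))
              ∘ₗ ((Coalgebra.comul (R := C) (A := H)).rTensor H) := by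
        ext a b; simp
      have nat2 : (TensorProduct.assoc C H H H).toLinearMap
            ∘ₗ ((HopfAlgebra.antipode (R := C) (A := H)).lTensor (H ⊗[C] H))
            ∘ₗ (TensorProduct.assoc C H H H).symm.toLinearMap
          = ((HopfAlgebra.antipode (R := C) (A := H)).lTensor H).lTensor H := by
        ext a b c; simp
      rw [hBmap]
      simp only [LinearMap.comp_apply]
      rw [e]
      simp only [LinearMap.comp_apply, LinearEquiv.coe_coe]
      rw [← Coalgebra.coassoc_symm_apply h]
      have h2 := LinearMap.congr_fun nat2
        (((Coalgebra.comul (R := C) (A := H)).lTensor H) (Coalgebra.comul (R := C) h))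
      simp only [LinearMap.comp_apply, LinearEquiv.coe_coe] at h2
      rw [h2, ← LinearMap.lTensor_comp_apply, ← LinearMap.lTensor_comp_apply,
        LinearMap.comp_assoc, HopfAlgebra.mul_antipode_lTensor_comul, LinearMap.lTensor_comp_apply,
        Coalgebra.lTensor_counit_comul h]
      simp
    calc ((Δ.rep h).map fun p => ((Δ.rep p.1).map fun q =>
            q.1 ⊗ₜ[C] (q.2 * HopfAlgebra.antipode (R := C) p.2)).sum).sum
        = ((Δ.rep h).map fun p => Bmap (p.1 ⊗ₜ[C] p.2)).sum := by
          simp only [stepA]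
      _ = Bmap (((Δ.rep h).map fun p => p.1 ⊗ₜ[C] p.2).sum) :=
          (AdjAux.map_listsum Bmap _ _).symm
      _ = h ⊗ₜ[C] (1 : H) := by rw [← Δ.rep_spec h, stepC]
  have K2t : ∀ h : H,
      ((Δ.rep h).map fun p => ((Δ.rep p.2).map fun q =>
          (p.1 * HopfAlgebra.antipode (R := C) q.1) ⊗ₜ[C] q.2).sum).sum
        = (1 : H) ⊗ₜ[C] h := by
    intro h
    set B2 : H ⊗[C] H →ₗ[C] H ⊗[C] H :=
      ((LinearMap.mul' C H ∘ₗ (HopfAlgebra.antipode (R := C) (A := H)).lTensor H).rTensor H)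
        ∘ₗ (TensorProduct.assoc C H H H).symm.toLinearMap
        ∘ₗ ((Coalgebra.comul (R := C) (A := H)).lTensor H) with hB2
    have stepA : ∀ p : H × H, B2 (p.1 ⊗ₜ[C] p.2)
        = ((Δ.rep p.2).map fun q =>
            (p.1 * HopfAlgebra.antipode (R := C) q.1) ⊗ₜ[C] q.2).sum := by
      intro p
      rw [hB2]
      simp only [LinearMap.comp_apply, LinearMap.lTensor_tmul]
      rw [Δ.rep_spec p.2, AdjAux.tmul_list_sum, AdjAux.map_listsum, AdjAux.map_listsum]
      simp [List.map_map, Function.comp]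
    have stepC : B2 (Coalgebra.comul (R := C) h) = (1 : H) ⊗ₜ[C] h := by
      rw [hB2]
      simp only [LinearMap.comp_apply, LinearEquiv.coe_coe]
      rw [Coalgebra.coassoc_symm_apply h, ← LinearMap.rTensor_comp_apply,
        LinearMap.comp_assoc, HopfAlgebra.mul_antipode_lTensor_comul, LinearMap.rTensor_comp_apply,
        Coalgebra.rTensor_counit_comul h]
      simp
    calc ((Δ.rep h).map fun p => ((Δ.rep p.2).map fun q =>
            (p.1 * HopfAlgebra.antipode (R := C) q.1) ⊗ₜ[C] q.2).sum).sum
        = ((Δ.rep h).map fun p => B2 (p.1 ⊗ₜ[C] p.2)).sum := by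
          simp only [stepA]
      _ = B2 (((Δ.rep h).map fun p => p.1 ⊗ₜ[C] p.2).sum) :=
          (AdjAux.map_listsum B2 _ _).symm
      _ = (1 : H) ⊗ₜ[C] h := by rw [← Δ.rep_spec h, stepC]
  obtain ⟨st2, hst2⟩ : ∃ φ : H ⊗[C] H →+ H ⊗[C] H,
      ∀ a b : H, φ (a ⊗ₜ[C] b) = star a ⊗ₜ[C] star b := by
    refine ⟨AdjAux.liftB (C := C) (fun a b => star a ⊗ₜ[C] star b) ?_ ?_ ?_,
      fun a b => AdjAux.liftB_tmul _ _ _ _ a b⟩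
    · intro a a' b; simp [star_add, TensorProduct.add_tmul]
    · intro a b b'; simp [star_add, TensorProduct.tmul_add]
    · intro c a b
      simp [star_smul, TensorProduct.smul_tmul', TensorProduct.tmul_smul]
  obtain ⟨sg2, hsg2⟩ : ∃ φ : H ⊗[C] H →+ H ⊗[C] H, ∀ a b : H,
      φ (a ⊗ₜ[C] b) = (star (HopfAlgebra.antipode (R := C) b)) ⊗ₜ[C]
        (star (HopfAlgebra.antipode (R := C) a)) := by
    refine ⟨AdjAux.liftB (C := C) _ ?_ ?_ ?_, fun a b => AdjAux.liftB_tmul _ _ _ _ a b⟩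
    · intro a a' b; rw [map_add, star_add, TensorProduct.tmul_add]
    · intro a b b'; rw [map_add, star_add, TensorProduct.add_tmul]
    · intro c a b
      simp [map_smul, star_smul, TensorProduct.smul_tmul', TensorProduct.tmul_smul]
  have sg2smul : ∀ (c : C) (t : H ⊗[C] H), sg2 (c • t) = star c • sg2 t := by
    intro c t
    induction t using TensorProduct.induction_on with
    | zero => simp
    | tmul a b =>
        rw [TensorProduct.smul_tmul', hsg2, hsg2, map_smul, star_smul,
          TensorProduct.tmul_smul]
    | add s t hs ht => rw [smul_add, map_add, hs, ht, map_add, smul_add]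
  have sg2sg2 : ∀ t : H ⊗[C] H, sg2 (sg2 t) = t := by
    intro t
    induction t using TensorProduct.induction_on with
    | zero => simp
    | tmul a b => rw [hsg2, hsg2, hκκ, hκκ]
    | add s t hs ht => rw [map_add, map_add, hs, ht]
  have hF : ∀ u : H, Coalgebra.comul (R := C) (star (HopfAlgebra.antipode (R := C) u))
      = sg2 (Coalgebra.comul (R := C) u) := by
    intro u
    rw [hcomul_star (HopfAlgebra.antipode (R := C) u)]
    have e1 : ((Δ.rep (HopfAlgebra.antipode (R := C) u)).map fun p =>
        star p.1 ⊗ₜ[C] star p.2).sum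
        = st2 (Coalgebra.comul (R := C) (HopfAlgebra.antipode (R := C) u)) := by
      rw [Δ.rep_spec (HopfAlgebra.antipode (R := C) u), AdjAux.map_listsum]
      simp only [hst2]
    rw [e1, AdjAux.comul_antipode_apply u]
    generalize (Coalgebra.comul (R := C) u) = t
    induction t using TensorProduct.induction_on with
    | zero => simp
    | tmul a b => simp [hst2, hsg2]
    | add s t hs ht => simp only [map_add, hs, ht]
  have hFκ : ∀ u : H,
      sg2 (Coalgebra.comul (R := C) (star (HopfAlgebra.antipode (R := C) u)))
        = Coalgebra.comul (R := C) u := by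
    intro u; rw [hF, sg2sg2]
  obtain ⟨rho, hrho⟩ : ∃ φ : H ⊗[C] H →+ H ⊗[C] (H ⊗[C] H), ∀ a b : H,
      φ (a ⊗ₜ[C] b) = (star (HopfAlgebra.antipode (R := C) b)) ⊗ₜ[C]
        (sg2 (Coalgebra.comul (R := C) a)) := by
    refine ⟨AdjAux.liftB (C := C) _ ?_ ?_ ?_, fun a b => AdjAux.liftB_tmul _ _ _ _ a b⟩
    · intro a a' b; rw [map_add, map_add, TensorProduct.tmul_add]
    · intro a b b'; rw [map_add, star_add, TensorProduct.add_tmul]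
    · intro c a b
      rw [map_smul, sg2smul, TensorProduct.tmul_smul, map_smul, star_smul,
        ← TensorProduct.smul_tmul']
  have rho_sg2 : ∀ t : H ⊗[C] H,
      rho (sg2 t) = (Coalgebra.comul (R := C) (A := H)).lTensor H t := by
    intro t
    induction t using TensorProduct.induction_on with
    | zero => simp
    | tmul a b => rw [hsg2, hrho, hκκ, hFκ, LinearMap.lTensor_tmul]
    | add s t hs ht => rw [map_add, map_add, hs, ht, map_add]
  have lemA : ∀ (h : H) (x' y' : E),
      ip (hE (star (HopfAlgebra.antipode (R := C) h)) x') y'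
        = ((Δ.rep h).map fun p =>
            actD p.1 (ip x' (hE (HopfAlgebra.antipode (R := C) p.2) y'))).sum := by
    intro h x' y'
    obtain ⟨FA, hFA⟩ : ∃ φ : H ⊗[C] H →+ D, ∀ a b : H,
        φ (a ⊗ₜ[C] b)
          = ip (hE (star (HopfAlgebra.antipode (R := C) a)) x') (hE b y') := by
      refine ⟨AdjAux.liftB (C := C) _ ?_ ?_ ?_, fun a b => AdjAux.liftB_tmul _ _ _ _ a b⟩
      · intro a a' b; rw [map_add, star_add, hEadd, hip_addl]
      · intro a b b'; rw [hEadd, hip_addr]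
      · intro c a b
        rw [map_smul, star_smul, hEsmul, hip_smull, star_star, hEsmul, hip_smulr]
    have e1 : ∀ p : H × H,
        actD p.1 (ip x' (hE (HopfAlgebra.antipode (R := C) p.2) y'))
          = ((Δ.rep p.1).map fun q =>
              FA (q.1 ⊗ₜ[C] (q.2 * HopfAlgebra.antipode (R := C) p.2))).sum := by
      intro p
      simp only [hcov, hFA, ← hE_mulH]
    calc ip (hE (star (HopfAlgebra.antipode (R := C) h)) x') y'
        = FA (h ⊗ₜ[C] (1 : H)) := by rw [hFA, hE_one]
      _ = FA (((Δ.rep h).map fun p => ((Δ.rep p.1).map fun q =>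
            q.1 ⊗ₜ[C] (q.2 * HopfAlgebra.antipode (R := C) p.2)).sum).sum) := by
          rw [K1t h]
      _ = ((Δ.rep h).map fun p => FA (((Δ.rep p.1).map fun q =>
            q.1 ⊗ₜ[C] (q.2 * HopfAlgebra.antipode (R := C) p.2)).sum)).sum :=
          AdjAux.map_listsum FA _ _
      _ = ((Δ.rep h).map fun p => ((Δ.rep p.1).map fun q =>
            FA (q.1 ⊗ₜ[C] (q.2 * HopfAlgebra.antipode (R := C) p.2))).sum).sum := by
          simp only [AdjAux.map_listsum]
      _ = ((Δ.rep h).map fun p =>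
            actD p.1 (ip x' (hE (HopfAlgebra.antipode (R := C) p.2) y'))).sum := by
          simp only [e1]
  have lemB : ∀ (h : H) (x' y' : E),
      ip x' (hE h y')
        = ((Δ.rep h).map fun p => actD p.2 (ip (hE (star p.1) x') y')).sum := by
    intro h x' y'
    obtain ⟨FB, hFB⟩ : ∃ φ : H ⊗[C] H →+ D, ∀ a b : H,
        φ (a ⊗ₜ[C] b) = ip (hE (star a) x') (hE b y') := by
      refine ⟨AdjAux.liftB (C := C) _ ?_ ?_ ?_, fun a b => AdjAux.liftB_tmul _ _ _ _ a b⟩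
      · intro a a' b; rw [star_add, hEadd, hip_addl]
      · intro a b b'; rw [hEadd, hip_addr]
      · intro c a b
        rw [star_smul, hEsmul, hip_smull, star_star, hEsmul, hip_smulr]
    have e1 : ∀ p : H × H,
        actD p.2 (ip (hE (star p.1) x') y')
          = ((Δ.rep p.2).map fun q =>
              FB ((p.1 * HopfAlgebra.antipode (R := C) q.1) ⊗ₜ[C] q.2)).sum := by
      intro p
      simp only [hcov, hFB, ← hE_mulH, star_mul]
    calc ip x' (hE h y')
        = FB ((1 : H) ⊗ₜ[C] h) := by rw [hFB, star_one, hE_one]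
      _ = FB (((Δ.rep h).map fun p => ((Δ.rep p.2).map fun q =>
            (p.1 * HopfAlgebra.antipode (R := C) q.1) ⊗ₜ[C] q.2).sum).sum) := by
          rw [K2t h]
      _ = ((Δ.rep h).map fun p => FB (((Δ.rep p.2).map fun q =>
            (p.1 * HopfAlgebra.antipode (R := C) q.1) ⊗ₜ[C] q.2).sum)).sum :=
          AdjAux.map_listsum FB _ _
      _ = ((Δ.rep h).map fun p => ((Δ.rep p.2).map fun q =>
            FB ((p.1 * HopfAlgebra.antipode (R := C) q.1) ⊗ₜ[C] q.2)).sum).sum := by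
          simp only [AdjAux.map_listsum]
      _ = ((Δ.rep h).map fun p => actD p.2 (ip (hE (star p.1) x') y')).sum := by
          simp only [e1]
  obtain ⟨Ehat, hEhat⟩ : ∃ φ : H ⊗[C] (H ⊗[C] H) →+ D, ∀ u v w : H,
      φ (u ⊗ₜ[C] (v ⊗ₜ[C] w))
        = actD (star (HopfAlgebra.antipode (R := C) v))
            (ip (hE (HopfAlgebra.antipode (R := C) w) x)
              (T' (hE (star u) y))) := by
    refine ⟨AdjAux.liftB3 (C := C) _ ?_ ?_ ?_ ?_ ?_,
      fun u v w => AdjAux.liftB3_tmul _ _ _ _ _ _ u v w⟩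
    · intro a a' b d
      rw [star_add, hEadd, T'add, hip_addr, (hactD_linD _).map_add]
    · intro a b b' d
      rw [map_add, star_add]
      exact (hactD_lin _).map_add _ _
    · intro a b d d'
      rw [map_add, hEadd, hip_addl, (hactD_linD _).map_add]
    · intro c a b d
      rw [star_smul, hEsmul, T'smul, hip_smulr, (hactD_linD _).map_smul,
        map_smul, star_smul, (hactD_lin _).map_smul]
    · intro c a b d
      rw [map_smul, star_smul, (hactD_lin _).map_smul, map_smul, hEsmul,
        hip_smull, (hactD_linD _).map_smul]
  rw [ipsuml, ipsumr]
  have step1 : ∀ p : H × H,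
      ip (hE p.1 (T (hE (HopfAlgebra.antipode (R := C) p.2) x))) y
        = ((Δ.rep (star (HopfAlgebra.antipode (R := C) p.1))).map fun q =>
            Ehat ((star (HopfAlgebra.antipode (R := C) q.2)) ⊗ₜ[C]
              ((star (HopfAlgebra.antipode (R := C) q.1)) ⊗ₜ[C] p.2))).sum := by
    intro p
    have h1 : ip (hE p.1 (T (hE (HopfAlgebra.antipode (R := C) p.2) x))) y
        = ip (hE (star (HopfAlgebra.antipode (R := C)
            (star (HopfAlgebra.antipode (R := C) p.1))))
            (T (hE (HopfAlgebra.antipode (R := C) p.2) x))) y := by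
      rw [hκκ]
    rw [h1, lemA (star (HopfAlgebra.antipode (R := C) p.1)) _ y]
    simp only [hT, hEhat, hκκ, star_star]
  have step2 : ∀ r : H × H,
      ip x (hE r.1 (T' (hE (HopfAlgebra.antipode (R := C) r.2) y)))
        = ((Δ.rep r.1).map fun s =>
            Ehat ((star (HopfAlgebra.antipode (R := C) r.2)) ⊗ₜ[C]
              ((star (HopfAlgebra.antipode (R := C) s.2)) ⊗ₜ[C]
                (star (HopfAlgebra.antipode (R := C) s.1))))).sum := by
    intro r
    rw [lemB r.1 x (T' (hE (HopfAlgebra.antipode (R := C) r.2) y))]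
    simp only [hEhat, hκκ, hSκ, star_star]
  simp only [step1, step2]
  have innerL : ∀ p : H × H,
      ((Δ.rep (star (HopfAlgebra.antipode (R := C) p.1))).map fun q =>
          Ehat ((star (HopfAlgebra.antipode (R := C) q.2)) ⊗ₜ[C]
            ((star (HopfAlgebra.antipode (R := C) q.1)) ⊗ₜ[C] p.2))).sum
        = Ehat (((Δ.rep (star (HopfAlgebra.antipode (R := C) p.1))).map fun q =>
            (star (HopfAlgebra.antipode (R := C) q.2)) ⊗ₜ[C]
              ((star (HopfAlgebra.antipode (R := C) q.1)) ⊗ₜ[C] p.2)).sum) :=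
    fun p => (AdjAux.map_listsum Ehat _ _).symm
  have innerR : ∀ r : H × H,
      ((Δ.rep r.1).map fun s =>
          Ehat ((star (HopfAlgebra.antipode (R := C) r.2)) ⊗ₜ[C]
            ((star (HopfAlgebra.antipode (R := C) s.2)) ⊗ₜ[C]
              (star (HopfAlgebra.antipode (R := C) s.1))))).sum
        = Ehat (((Δ.rep r.1).map fun s =>
            (star (HopfAlgebra.antipode (R := C) r.2)) ⊗ₜ[C]
              ((star (HopfAlgebra.antipode (R := C) s.2)) ⊗ₜ[C]
                (star (HopfAlgebra.antipode (R := C) s.1)))).sum) :=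
    fun r => (AdjAux.map_listsum Ehat _ _).symm
  simp only [innerL, innerR]
  rw [← AdjAux.map_listsum Ehat, ← AdjAux.map_listsum Ehat]
  congr 1
  -- X = Y in H ⊗ (H ⊗ H)
  have hX : ((Δ.rep g).map fun p =>
      ((Δ.rep (star (HopfAlgebra.antipode (R := C) p.1))).map fun q =>
        (star (HopfAlgebra.antipode (R := C) q.2)) ⊗ₜ[C]
          ((star (HopfAlgebra.antipode (R := C) q.1)) ⊗ₜ[C] p.2)).sum).sum
      = (Coalgebra.comul (R := C) (A := H)).lTensor H (Coalgebra.comul (R := C) g) := by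
    have inner : ∀ p : H × H,
        ((Δ.rep (star (HopfAlgebra.antipode (R := C) p.1))).map fun q =>
          (star (HopfAlgebra.antipode (R := C) q.2)) ⊗ₜ[C]
            ((star (HopfAlgebra.antipode (R := C) q.1)) ⊗ₜ[C] p.2)).sum
          = ((TensorProduct.assoc C H H H).toLinearMap ∘ₗ
              (Coalgebra.comul (R := C) (A := H)).rTensor H) (p.1 ⊗ₜ[C] p.2) := by
      intro p
      rw [LinearMap.comp_apply, LinearMap.rTensor_tmul]
      rw [← hFκ p.1, Δ.rep_spec (star (HopfAlgebra.antipode (R := C) p.1)),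
        AdjAux.map_listsum]
      simp only [hsg2]
      rw [AdjAux.list_sum_tmul, AdjAux.map_listsum]
      simp [List.map_map, Function.comp, TensorProduct.assoc_tmul]
    simp only [inner]
    rw [← AdjAux.map_listsum (((TensorProduct.assoc C H H H).toLinearMap ∘ₗ
        (Coalgebra.comul (R := C) (A := H)).rTensor H)) (Δ.rep g) (fun p => p.1 ⊗ₜ[C] p.2),
      ← Δ.rep_spec g]
    rw [LinearMap.comp_apply]
    simp only [LinearEquiv.coe_coe]
    exact Coalgebra.coassoc_apply g
  have hY : ((Δ.rep (star (HopfAlgebra.antipode (R := C) g))).map fun r =>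
      ((Δ.rep r.1).map fun s =>
        (star (HopfAlgebra.antipode (R := C) r.2)) ⊗ₜ[C]
          ((star (HopfAlgebra.antipode (R := C) s.2)) ⊗ₜ[C]
            (star (HopfAlgebra.antipode (R := C) s.1)))).sum).sum
      = (Coalgebra.comul (R := C) (A := H)).lTensor H (Coalgebra.comul (R := C) g) := by
    have inner : ∀ r : H × H,
        ((Δ.rep r.1).map fun s =>
          (star (HopfAlgebra.antipode (R := C) r.2)) ⊗ₜ[C]
            ((star (HopfAlgebra.antipode (R := C) s.2)) ⊗ₜ[C]
              (star (HopfAlgebra.antipode (R := C) s.1)))).sum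
          = rho (r.1 ⊗ₜ[C] r.2) := by
      intro r
      rw [hrho, Δ.rep_spec r.1, AdjAux.map_listsum]
      simp only [hsg2]
      rw [AdjAux.tmul_list_sum]
    simp only [inner]
    rw [← AdjAux.map_listsum rho (Δ.rep (star (HopfAlgebra.antipode (R := C) g)))
        (fun r => r.1 ⊗ₜ[C] r.2),
      ← Δ.rep_spec (star (HopfAlgebra.antipode (R := C) g)), hF g, rho_sg2]
  rw [hX, hY]
end

section
/- For the induced adjoint H-action on operators of an H-covariant inner product D-module, the rank-one operators Θ_{x,y}(z) = x·⟨y,z⟩ satisfy g ▷ Θ_{x,y} = Θ_{g₍₁₎ ▷ x, S(g₍₂₎)* ▷ y}; in particular the finite rank operators are preserved by the H-action. -/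
open scoped TensorProduct

theorem SweedlerRep.apply_comul {C H : Type*} [CommSemiring C] [AddCommMonoid H] [Module C H]
    [CoalgebraStruct C H] (Δ : SweedlerRep C H) {M : Type*} [AddCommMonoid M] [Module C M]
    (f : H ⊗[C] H →ₗ[C] M) (g : H) :
    f (Coalgebra.comul (R := C) g) = ((Δ.rep g).map fun p => f (p.1 ⊗ₜ[C] p.2)).sum := by
  rw [Δ.rep_spec, map_list_sum, List.map_map]
  rfl

/-- For the induced adjoint `H`-action on operators of an `H`-covariant
inner product `D`-module, the rank-one operators `Θ_{x,y}(z) = x·⟨y,z⟩` satisfy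
`g ▷ Θ_{x,y} = Θ_{g₍₁₎ ▷ x, S(g₍₂₎)* ▷ y}`; in particular the finite rank operators are
preserved by the `H`-action. -/
theorem adjointAction_rankOne
    {C H D E : Type*} [CommRing C] [StarRing C]
    [Ring H] [HopfAlgebra C H] [StarRing H] [StarModule C H]
    [Ring D] [Algebra C D] [StarRing D] [StarModule C D]
    [AddCommGroup E] [Module C E]
    (Δ : SweedlerRep C H)
    -- Hopf `*`-algebra conditions
    (hcomul_star : ∀ g : H, Coalgebra.comul (R := C) (star g)
      = ((Δ.rep g).map fun p => star p.1 ⊗ₜ[C] star p.2).sum)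
    (hcounit_star : ∀ g : H,
      Coalgebra.counit (R := C) (star g) = star (Coalgebra.counit (R := C) g))
    (hS : ∀ g : H,
      star (HopfAlgebra.antipode (R := C)
        (star (HopfAlgebra.antipode (R := C) g))) = g)
    -- `actD` is a `*`-action of `H` on the `*`-algebra `D`
    (actD : H → D → D)
    (hactD_one : ∀ d, actD 1 d = d)
    (hactD_mulH : ∀ g h d, actD (g * h) d = actD g (actD h d))
    (hactD_lin : ∀ d, IsLinearMap C fun g => actD g d)
    (hactD_linD : ∀ g, IsLinearMap C (actD g))
    (hactD_alg : ∀ g d d', actD g (d * d') =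
      ((Δ.rep g).map fun p => actD p.1 d * actD p.2 d').sum)
    (hactD_star : ∀ g d, star (actD g d) =
      actD (star (HopfAlgebra.antipode (R := C) g)) (star d))
    -- `E` is a right `D`-module via `rmul`
    (rmul : E → D → E)
    (hrmul_one : ∀ x, rmul x 1 = x)
    (hrmul_mul : ∀ x d d', rmul x (d * d') = rmul (rmul x d) d')
    (hrmul_addE : ∀ x x' d, rmul (x + x') d = rmul x d + rmul x' d)
    (hrmul_addD : ∀ x d d', rmul x (d + d') = rmul x d + rmul x d')
    (hrmul_smul : ∀ (c : C) x d, rmul (c • x) d = c • rmul x d)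
    (hrmul_smulD : ∀ (c : C) x d, rmul x (c • d) = c • rmul x d)
    -- `ip` is a sesquilinear `D`-valued inner product on `E`
    (ip : E → E → D)
    (hip_addl : ∀ x x' y, ip (x + x') y = ip x y + ip x' y)
    (hip_addr : ∀ x y y', ip x (y + y') = ip x y + ip x y')
    (hip_smull : ∀ (c : C) x y, ip (c • x) y = star c • ip x y)
    (hip_smulr : ∀ (c : C) x y, ip x (c • y) = c • ip x y)
    (hip_rmul : ∀ x y d, ip x (rmul y d) = ip x y * d)
    (hip_star : ∀ x y, star (ip x y) = ip y x)
    -- `hE` is an `H`-module structure on `E` ...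
    (hE : H → E → E)
    (hE_one : ∀ x, hE 1 x = x)
    (hE_mulH : ∀ g h x, hE (g * h) x = hE g (hE h x))
    (hE_lin : ∀ x, IsLinearMap C fun g => hE g x)
    (hE_linE : ∀ g, IsLinearMap C (hE g))
    -- ... compatible with the right `D`-module structure
    (hE_compat : ∀ g x d, hE g (rmul x d) =
      ((Δ.rep g).map fun p => rmul (hE p.1 x) (actD p.2 d)).sum)
    -- the inner product is `H`-covariant: `g ▷ ⟨x,y⟩ = ⟨S(g₍₁₎)* ▷ x, g₍₂₎ ▷ y⟩`
    (hcov : ∀ (g : H) (x y : E), actD g (ip x y) =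
      ((Δ.rep g).map fun p =>
        ip (hE (star (HopfAlgebra.antipode (R := C) p.1)) x) (hE p.2 y)).sum) :
    -- `(g ▷ Θ_{x,y})(z) = Θ_{g₍₁₎ ▷ x, S(g₍₂₎)* ▷ y}(z)`, where `Θ_{x,y}(z) = x·⟨y,z⟩`
    ∀ (g : H) (x y z : E),
      ((Δ.rep g).map fun p =>
          hE p.1 (rmul x (ip y (hE (HopfAlgebra.antipode (R := C) p.2) z)))).sum
      = ((Δ.rep g).map fun p =>
          rmul (hE p.1 x)
            (ip (hE (star (HopfAlgebra.antipode (R := C) p.2)) y) z)).sum := by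
  intro g x y z
  set Sa : H →ₗ[C] H := HopfAlgebra.antipode (R := C) with hSa
  set Dc : H →ₗ[C] H ⊗[C] H := Coalgebra.comul (R := C) with hDc
  -- the trilinear map Φ a b c = rmul (hE a x) (ip (hE (star (Sa b)) y) (hE c z))
  have innerLin : ∀ (u v : E), IsLinearMap C (fun c : H => rmul u (ip v (hE c z))) := fun u v =>
    ⟨fun c c' => by rw [(hE_lin z).map_add, hip_addr, hrmul_addD],
     fun t c => by rw [(hE_lin z).map_smul, hip_smulr, hrmul_smulD]⟩
  set Φ : H →ₗ[C] H →ₗ[C] H →ₗ[C] E := LinearMap.mk₂ C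
    (fun a b => IsLinearMap.mk' _ (innerLin (hE a x) (hE (star (Sa b)) y)))
    (fun a a' b => LinearMap.ext fun c => by
      simp only [IsLinearMap.mk'_apply, LinearMap.add_apply]
      rw [(hE_lin x).map_add, hrmul_addE])
    (fun t a b => LinearMap.ext fun c => by
      simp only [IsLinearMap.mk'_apply, LinearMap.smul_apply]
      rw [(hE_lin x).map_smul, hrmul_smul])
    (fun a b b' => LinearMap.ext fun c => by
      simp only [IsLinearMap.mk'_apply, LinearMap.add_apply]
      rw [map_add, star_add, (hE_lin y).map_add, hip_addl, hrmul_addD])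
    (fun t a b => LinearMap.ext fun c => by
      simp only [IsLinearMap.mk'_apply, LinearMap.smul_apply]
      rw [map_smul, star_smul, (hE_lin y).map_smul, hip_smull, star_star, hrmul_smulD])
    with hΦ
  set Ψ : H ⊗[C] (H ⊗[C] H) →ₗ[C] E :=
    TensorProduct.lift ((TensorProduct.uncurry (RingHom.id C) H H E).comp Φ) with hΨ
  have Ψt : ∀ a b c : H, Ψ (a ⊗ₜ[C] (b ⊗ₜ[C] c))
      = rmul (hE a x) (ip (hE (star (Sa b)) y) (hE c z)) := fun a b c => by
    simp [hΨ, hΦ]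
  set σ : H ⊗[C] H →ₗ[C] H := (LinearMap.mul' C H) ∘ₗ (Sa.lTensor H) with hσ
  set β : (H ⊗[C] (H ⊗[C] H)) ⊗[C] H →ₗ[C] H ⊗[C] (H ⊗[C] (H ⊗[C] H)) :=
    (LinearMap.lTensor H (TensorProduct.assoc C H H H).toLinearMap) ∘ₗ
      (TensorProduct.assoc C H (H ⊗[C] H) H).toLinearMap with hβ
  set Δ₂ : H →ₗ[C] H ⊗[C] (H ⊗[C] H) := (Dc.lTensor H) ∘ₗ Dc with hΔ₂
  set Ω : H ⊗[C] H →ₗ[C] H ⊗[C] (H ⊗[C] H) :=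
    (LinearMap.lTensor H (LinearMap.lTensor H σ)) ∘ₗ β ∘ₗ (Δ₂.rTensor H) with hΩ
  set r1 : H →ₗ[C] H ⊗[C] H := (TensorProduct.mk C H H).flip 1 with hr1
  have hG : β ∘ₗ ((Dc.lTensor H).rTensor H) ∘ₗ (TensorProduct.assoc C H H H).symm.toLinearMap
      = ((TensorProduct.assoc C H H H).toLinearMap ∘ₗ (Dc.rTensor H)).lTensor H := by
    ext a b c
    simp [hβ]
  have hσΔ : σ ∘ₗ Dc = (Algebra.linearMap C H) ∘ₗ (Coalgebra.counit (R := C)) := by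
    rw [hσ, LinearMap.comp_assoc, hDc, hSa]
    exact HopfAlgebra.mul_antipode_lTensor_comul
  have hεr1 : (((Algebra.linearMap C H) ∘ₗ (Coalgebra.counit (R := C))).lTensor H) ∘ₗ Dc = r1 := by
    rw [LinearMap.lTensor_comp, LinearMap.comp_assoc, hDc,
      Coalgebra.lTensor_counit_comp_comul]
    apply LinearMap.ext; intro a
    simp [hr1, Algebra.algebraMap_eq_smul_one, TensorProduct.tmul_smul, TensorProduct.smul_tmul']
  have hco : (TensorProduct.assoc C H H H).toLinearMap ∘ₗ (Dc.rTensor H) ∘ₗ Dc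
      = (Dc.lTensor H) ∘ₗ Dc := by
    rw [hDc]; exact Coalgebra.coassoc
  have KEY : Ω (Dc g) = (r1.lTensor H) (Dc g) := by
    have e1 : (Dc.rTensor H) (Dc g)
        = (TensorProduct.assoc C H H H).symm.toLinearMap ((Dc.lTensor H) (Dc g)) := by
      simpa [hDc] using (Coalgebra.coassoc_symm_apply (R := C) g).symm
    have e2 : Ω (Dc g) = ((LinearMap.lTensor H (LinearMap.lTensor H σ)))
        ((β ∘ₗ ((Dc.lTensor H).rTensor H) ∘ₗ (TensorProduct.assoc C H H H).symm.toLinearMap)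
          ((Dc.lTensor H) (Dc g))) := by
      simp only [hΩ, LinearMap.comp_apply, hΔ₂, LinearMap.rTensor_comp,
        LinearEquiv.coe_coe]
      rw [e1]
      rfl
    rw [e2, hG, ← LinearMap.comp_apply, ← LinearMap.lTensor_comp,
      ← LinearMap.comp_apply, ← LinearMap.lTensor_comp]
    suffices hF : (LinearMap.lTensor H σ ∘ₗ
        ((TensorProduct.assoc C H H H).toLinearMap ∘ₗ Dc.rTensor H)) ∘ₗ Dc = r1 by
      rw [hF]
    rw [LinearMap.comp_assoc, LinearMap.comp_assoc, hco, ← LinearMap.comp_assoc,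
      ← LinearMap.lTensor_comp, hσΔ, hεr1]
  -- pointwise identification of the left-hand summands
  have P1 : ∀ a b : H, (Ψ ∘ₗ Ω) (a ⊗ₜ[C] b) = hE a (rmul x (ip y (hE (Sa b) z))) := by
    intro a b
    rw [hE_compat]
    have hF : (Ψ ∘ₗ Ω) (a ⊗ₜ[C] b)
        = ((Ψ ∘ₗ (LinearMap.lTensor H (LinearMap.lTensor H σ)) ∘ₗ β ∘ₗ
            ((TensorProduct.mk C (H ⊗[C] (H ⊗[C] H)) H).flip b) ∘ₗ (Dc.lTensor H)) (Dc a)) := by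
      simp [hΩ, hΔ₂]
    rw [hF, Δ.apply_comul]
    refine congrArg List.sum (congrArg (fun f => List.map f (Δ.rep a)) (funext fun q => ?_))
    have hGq : (Ψ ∘ₗ (LinearMap.lTensor H (LinearMap.lTensor H σ)) ∘ₗ β ∘ₗ
            ((TensorProduct.mk C (H ⊗[C] (H ⊗[C] H)) H).flip b) ∘ₗ (Dc.lTensor H))
          (q.1 ⊗ₜ[C] q.2)
        = (Ψ ∘ₗ (LinearMap.lTensor H (LinearMap.lTensor H σ)) ∘ₗ β ∘ₗ
            ((TensorProduct.mk C (H ⊗[C] (H ⊗[C] H)) H).flip b) ∘ₗ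
            (TensorProduct.mk C H (H ⊗[C] H) q.1)) (Dc q.2) := by
      simp
    rw [hGq, Δ.apply_comul, hcov]
    have hρ : ∀ (u : E) (L : List D), rmul u L.sum = (L.map fun d => rmul u d).sum := by
      intro u L
      have := map_list_sum (IsLinearMap.mk' (rmul u)
        ⟨fun d d' => hrmul_addD u d d', fun c d => hrmul_smulD c u d⟩) L
      exact this
    rw [hρ, List.map_map]
    refine congrArg List.sum (congrArg (fun f => List.map f (Δ.rep q.2)) (funext fun r => ?_))
    simp only [Function.comp_apply]
    rw [← hE_mulH]
    simp only [LinearMap.comp_apply, TensorProduct.mk_apply, LinearMap.flip_apply,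
      TensorProduct.mk_apply, hβ, LinearEquiv.coe_coe, TensorProduct.assoc_tmul,
      LinearMap.lTensor_tmul, hσ, LinearMap.mul'_apply]
    rw [Ψt]
  -- pointwise identification of the right-hand summands
  have P2 : ∀ a b : H, (Ψ ∘ₗ (r1.lTensor H)) (a ⊗ₜ[C] b)
      = rmul (hE a x) (ip (hE (star (Sa b)) y) z) := by
    intro a b
    simp only [LinearMap.comp_apply, LinearMap.lTensor_tmul, hr1, LinearMap.flip_apply,
      TensorProduct.mk_apply]
    rw [Ψt, hE_one]
  -- assemble
  have hLHS : ((Δ.rep g).map fun p =>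
        hE p.1 (rmul x (ip y (hE (Sa p.2) z)))).sum = (Ψ ∘ₗ Ω) (Dc g) := by
    rw [hDc, Δ.apply_comul (Ψ ∘ₗ Ω) g]
    exact congrArg List.sum (congrArg (fun f => List.map f (Δ.rep g))
      (funext fun p => (P1 p.1 p.2).symm))
  have hRHS : ((Δ.rep g).map fun p =>
        rmul (hE p.1 x) (ip (hE (star (Sa p.2)) y) z)).sum = (Ψ ∘ₗ (r1.lTensor H)) (Dc g) := by
    rw [hDc, Δ.apply_comul (Ψ ∘ₗ (r1.lTensor H)) g]
    exact congrArg List.sum (congrArg (fun f => List.map f (Δ.rep g))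
      (funext fun p => (P2 p.1 p.2).symm))
  rw [hLHS, hRHS]
  simp only [LinearMap.comp_apply]
  rw [KEY]
end

section
/- The subset U(H, A) of GL(H, A) consisting of elements additionally satisfying the unitarity condition a(g₍₁₎)(a(S(g₍₂₎)*))* = ε(g)1_A is a subgroup of GL(H, A): it is closed under convolution and under inversion. -/
/-! Work in the convolution algebra `Hom(H, A)`. The module-algebra axioms say that
`α b := (g ↦ g ▷ b)` is an algebra map `A → Hom(H, A)`, and `a ∈ GL(H, A)` becomes `a(1) = 1`,
`a(· h) = a ⋆ α(a h)` and `[α b, a] = 0`; unitarity becomes `a ⋆ a† = 1` for `a†(g) = a(S(g)*)*`.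
As `g ↦ S(g)*` is multiplicative and anti-comultiplicative, `†` is an anti-multiplicative
involution preserving `GL(H, A)`, so `(a ⋆ b) ⋆ (a ⋆ b)† = a ⋆ b ⋆ b† ⋆ a† = 1`. The formula `a⁻¹`
is a left convolution inverse of every `a ∈ GL(H, A)`; for unitary `a` it therefore equals the
right inverse `a†`, which is unitary again since `a† ⋆ a†† = a† ⋆ a = 1`. -/

open scoped TensorProduct

section GLGroup

variable {C H A : Type*} [CommRing C] [StarRing C]
  [Ring H] [HopfAlgebra C H] [StarRing H] [StarModule C H]
  [Ring A] [Algebra C A] [StarRing A] [StarModule C A]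

/-- The convolution product on `Hom(H, A)`: `(a * b)(g) = a(g₍₁₎) b(g₍₂₎)`. -/
def conv (Δ : SweedlerRep C H) (a b : H → A) : H → A :=
  fun g => ((Δ.rep g).map fun p => a p.1 * b p.2).sum

/-- The convolution unit `e(g) = ε(g)·1`. -/
def convUnit (C : Type*) {H : Type*} [CommRing C] [AddCommGroup H] [Module C H]
    [CoalgebraStruct C H] (A : Type*) [Ring A] [Algebra C A] : H → A :=
  fun g => Coalgebra.counit (R := C) g • (1 : A)

/-- Membership in `GL(H, A)`: a `C`-linear map `a : H → A` with (i) normalization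
`a(1) = 1`, (ii) action condition `a(gh) = a(g₍₁₎)(g₍₂₎ ▷ a(h))` and (iii) module
condition `(g₍₁₎ ▷ b) a(g₍₂₎) = a(g₍₁₎)(g₍₂₎ ▷ b)`. -/
def memGL (Δ : SweedlerRep C H) (act : H → A → A) (a : H → A) : Prop :=
  IsLinearMap C a ∧ a 1 = 1 ∧
  (∀ g h : H, a (g * h) = ((Δ.rep g).map fun p => a p.1 * act p.2 (a h)).sum) ∧
  (∀ (g : H) (b : A),
    ((Δ.rep g).map fun p => act p.1 b * a p.2).sum
      = ((Δ.rep g).map fun p => a p.1 * act p.2 b).sum)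

/-- The convolution inverse formula `a⁻¹(g) = g₍₂₎ ▷ a(S⁻¹(g₍₁₎))`. -/
def convInv (Δ : SweedlerRep C H) (act : H → A → A) (Sinv : H → H) (a : H → A) : H → A :=
  fun g => ((Δ.rep g).map fun p => act p.2 (a (Sinv p.1))).sum

end GLGroup


/-- Membership in `U(H, A)`: an element of `GL(H, A)` satisfying the unitarity condition
`a(g₍₁₎)(a(S(g₍₂₎)*))* = ε(g)·1`. -/
def memU {C H A : Type*} [CommRing C] [StarRing C]
    [Ring H] [HopfAlgebra C H] [StarRing H] [StarModule C H]
    [Ring A] [Algebra C A] [StarRing A] [StarModule C A]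
    (Δ : SweedlerRep C H) (act : H → A → A) (a : H → A) : Prop :=
  memGL Δ act a ∧
  ∀ g : H,
    ((Δ.rep g).map fun p =>
        a p.1 * star (a (star (HopfAlgebra.antipode (R := C) p.2)))).sum
      = Coalgebra.counit (R := C) g • (1 : A)

open Coalgebra HopfAlgebra TensorProduct WithConv

namespace SweedlerRep

section CoalgebraStruct

variable {C H : Type*} [CommSemiring C] [AddCommMonoid H] [Module C H] [CoalgebraStruct C H]
  (Δ : SweedlerRep C H)

theorem sum_map_eq_lift {M : Type*} [AddCommMonoid M] [Module C M] (φ : H →ₗ[C] H →ₗ[C] M)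
    (x : H) : ((Δ.rep x).map fun p => φ p.1 p.2).sum = lift φ (comul x) := by
  simp [Δ.rep_spec, map_list_sum, Function.comp_def]

theorem sum_map_mul_eq_convMul {A : Type*} [Semiring A] [Algebra C A]
    (f g : WithConv (H →ₗ[C] A)) (x : H) :
    ((Δ.rep x).map fun p => f p.1 * g p.2).sum = (f * g) x := by
  simp [Δ.rep_spec, map_list_sum, Function.comp_def]

end CoalgebraStruct

variable {C H : Type*} [CommSemiring C] [AddCommMonoid H] [Module C H] [Coalgebra C H]
  (Δ : SweedlerRep C H)

theorem sum_sum_mul_eq_sum_convMul {A : Type*} [Semiring A] [Algebra C A]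
    (B : H →ₗ[C] H →ₗ[C] A) (f : WithConv (H →ₗ[C] A)) (x : H) :
    ((Δ.rep x).map fun p => ((Δ.rep p.1).map fun q => B q.1 q.2).sum * f p.2).sum
      = ((Δ.rep x).map fun p => (toConv (B p.1) * f) p.2).sum := by
  let Φ : (H ⊗[C] H) ⊗[C] H →ₗ[C] A := LinearMap.mul' C A ∘ₗ TensorProduct.map (lift B) f.ofConv
  have hΦ (y z : H) :
      Φ ((TensorProduct.assoc C H H H).symm (y ⊗ₜ comul z)) = (toConv (B y) * f) z := by
    rw [LinearMap.convMul_apply]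
    induction comul (R := C) z using TensorProduct.induction_on <;> simp_all [Φ, tmul_add]
  calc _ = Φ (comul.rTensor H (comul x)) := by
          simp [Φ, Δ.sum_map_eq_lift, Δ.rep_spec x, map_list_sum, Function.comp_def]
    _ = Φ ((TensorProduct.assoc C H H H).symm (comul.lTensor H (comul x))) := by
          rw [coassoc_symm_apply]
    _ = _ := by
          rw [Δ.rep_spec x]
          simp [map_list_sum, Function.comp_def, hΦ]

end SweedlerRep

section Antipode

variable {C H : Type*} [CommSemiring C] [Semiring H] [HopfAlgebra C H]

theorem AlgHom.toConv_comp_antipode_mul {B : Type*} [Semiring B] [Algebra C B]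
    (i : H →ₐ[C] B) : toConv (i.toLinearMap ∘ₗ antipode C) * toConv i.toLinearMap = 1 := by
  have := LinearMap.algHom_comp_convMul_distrib i (toConv (antipode C)) (toConv LinearMap.id)
  rw [LinearMap.antipode_mul_id] at this
  ext
  simpa using congr($this.symm _)

/-- With `i₁ = (· ⊗ₜ 1)` and `i₂ = (1 ⊗ₜ ·)` one has `comul = i₁ ⋆ i₂`, and the right-hand side is
`(i₂ ∘ S) ⋆ (i₁ ∘ S)`, a left convolution inverse of `comul`; `comul ∘ S` is a right one. -/
theorem HopfAlgebra.comul_antipode (x : H) :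
    comul (antipode C x)
      = TensorProduct.map (antipode C) (antipode C) (TensorProduct.comm C H H (comul x)) := by
  let i₁ : H →ₐ[C] H ⊗[C] H := Algebra.TensorProduct.includeLeft
  let i₂ : H →ₐ[C] H ⊗[C] H := Algebra.TensorProduct.includeRight
  let swap : H →ₗ[C] H ⊗[C] H := TensorProduct.map (antipode C) (antipode C) ∘ₗ
    (TensorProduct.comm C H H).toLinearMap ∘ₗ comul
  have comul_eq : toConv comul = toConv i₁.toLinearMap * toConv i₂.toLinearMap := by
    have : LinearMap.mul' C (H ⊗[C] H) ∘ₗ TensorProduct.map i₁.toLinearMap i₂.toLinearMap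
        = LinearMap.id := by
      ext; simp [i₁, i₂]
    ext x
    exact congr($this (comul x)).symm
  have swap_eq : toConv swap
      = toConv (i₂.toLinearMap ∘ₗ antipode C) * toConv (i₁.toLinearMap ∘ₗ antipode C) := by
    have : LinearMap.mul' C (H ⊗[C] H) ∘ₗ
          TensorProduct.map (i₂.toLinearMap ∘ₗ antipode C) (i₁.toLinearMap ∘ₗ antipode C)
        = TensorProduct.map (antipode C) (antipode C) ∘ₗ
            (TensorProduct.comm C H H).toLinearMap := by
      ext; simp [i₁, i₂]
    ext x
    exact congr($this (comul x)).symm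
  have left_inv : toConv swap * toConv comul = 1 := by
    rw [swap_eq, comul_eq, mul_assoc, ← mul_assoc (toConv (i₁.toLinearMap ∘ₗ antipode C)),
      i₁.toConv_comp_antipode_mul, one_mul, i₂.toConv_comp_antipode_mul]
  exact congr($(left_inv_eq_right_inv left_inv LinearMap.comul_right_inv) x).symm

end Antipode

section ConvGL

variable {C H A : Type*} [CommSemiring C] [Semiring H] [Bialgebra C H] [Semiring A] [Algebra C A]

noncomputable def SweedlerRep.actionAlgHom (Δ : SweedlerRep C H) (act : H → A → A)
    (hact_lin : ∀ a : A, IsLinearMap C fun g => act g a)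
    (hact_linA : ∀ g : H, IsLinearMap C (act g))
    (hact_alg : ∀ (g : H) (a b : A), act g (a * b) =
      ((Δ.rep g).map fun p => act p.1 a * act p.2 b).sum)
    (hact_unit : ∀ g : H, act g 1 = counit (R := C) g • (1 : A)) :
    A →ₐ[C] WithConv (H →ₗ[C] A) :=
  AlgHom.ofLinearMap
    { toFun a := toConv (IsLinearMap.mk' (act · a) (hact_lin a))
      map_add' a b := by ext g; exact (hact_linA g).map_add a b
      map_smul' r a := by ext g; exact (hact_linA g).map_smul r a }
    (by ext g; simp [hact_unit, Algebra.algebraMap_eq_smul_one])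
    (fun a b => by ext g; simp [hact_alg, ← Δ.sum_map_mul_eq_convMul])

structure IsConvGL (α : A →ₐ[C] WithConv (H →ₗ[C] A)) (F : WithConv (H →ₗ[C] A)) : Prop where
  map_one : F 1 = 1
  comp_mulRight (h : H) : toConv (F.ofConv ∘ₗ LinearMap.mulRight C h) = F * α (F h)
  commute (b : A) : Commute (α b) F

variable {α : A →ₐ[C] WithConv (H →ₗ[C] A)}

theorem isConvGL_one : IsConvGL α 1 where
  map_one := by simp
  comp_mulRight h := by
    ext x
    simp [Algebra.smul_def, mul_comm]
  commute _ := Commute.one_right _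

theorem SweedlerRep.convMul_comp_mulRight (Δ : SweedlerRep C H) (F G : WithConv (H →ₗ[C] A))
    (h : H) :
    toConv ((F * G).ofConv ∘ₗ LinearMap.mulRight C h)
      = ((Δ.rep h).map fun p => toConv (F.ofConv ∘ₗ LinearMap.mulRight C p.1)
          * toConv (G.ofConv ∘ₗ LinearMap.mulRight C p.2)).sum := by
  have map_comp_mulRight (a b : H) :
      TensorProduct.map F.ofConv G.ofConv ∘ₗ LinearMap.mulRight C (a ⊗ₜ b)
        = TensorProduct.map (F.ofConv ∘ₗ LinearMap.mulRight C a)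
            (G.ofConv ∘ₗ LinearMap.mulRight C b) := by
    ext; simp
  ext x
  have apply_sum := map_list_sum (LinearMap.applyₗ (R := C) (M := H) (M₂ := A) x)
  simp only [LinearMap.applyₗ_apply_apply] at apply_sum
  simp [apply_sum, Bialgebra.comul_mul, Δ.rep_spec h, ← List.sum_map_mul_left, map_list_sum,
    Function.comp_def, ← map_comp_mulRight]

theorem IsConvGL.mul (Δ : SweedlerRep C H) {F G : WithConv (H →ₗ[C] A)} (hF : IsConvGL α F)
    (hG : IsConvGL α G) : IsConvGL α (F * G) where
  map_one := by
    simp [Bialgebra.comul_one, Algebra.TensorProduct.one_def, hF.map_one, hG.map_one]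
  comp_mulRight h := by
    rw [Δ.convMul_comp_mulRight, ← Δ.sum_map_mul_eq_convMul, map_list_sum, List.map_map,
      ← List.sum_map_mul_left]
    congr 1
    refine List.map_congr_left fun p _ => ?_
    simp only [hF.comp_mulRight, hG.comp_mulRight, Function.comp_apply, map_mul]
    rw [mul_assoc, ← mul_assoc (α _), (hG.commute _).eq]
    simp only [mul_assoc]
  commute b := (hF.commute b).mul_right (hG.commute b)

end ConvGL

section Dagger

variable {C H A : Type*} [CommSemiring C] [StarRing C] [Semiring H] [HopfAlgebra C H]
  [StarRing H] [StarModule C H] [Semiring A] [Algebra C A] [StarRing A] [StarModule C A]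

def dagger (F : WithConv (H →ₗ[C] A)) : WithConv (H →ₗ[C] A) :=
  toConv ((star F).ofConv ∘ₗ antipode C)

@[simp]
theorem dagger_apply (F : WithConv (H →ₗ[C] A)) (x : H) :
    dagger F x = star (F (star (antipode C x))) := rfl

theorem dagger_dagger (hS : ∀ g : H, star (antipode C (star (antipode C g))) = g)
    (F : WithConv (H →ₗ[C] A)) : dagger (dagger F) = F := by
  ext x
  simp [hS]

theorem dagger_one (hε : ∀ g : H, counit (R := C) (star g) = star (counit (R := C) g)) :
    dagger (1 : WithConv (H →ₗ[C] A)) = 1 := by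
  ext x
  simp [hε]

theorem dagger_mul (hΔ : ∀ g : H, comul (R := C) (star g) = star (comul g))
    (F G : WithConv (H →ₗ[C] A)) : dagger (F * G) = dagger G * dagger F := by
  ext x
  simp only [dagger_apply, LinearMap.convMul_apply, hΔ, comul_antipode]
  induction comul (R := C) x using TensorProduct.induction_on with
  | zero => simp
  | tmul a b => simp
  | add s t hs ht => simp_all

theorem dagger_comp_mulRight (F : WithConv (H →ₗ[C] A)) (h : H) :
    toConv ((dagger F).ofConv ∘ₗ LinearMap.mulRight C h)
      = dagger (toConv (F.ofConv ∘ₗ LinearMap.mulRight C (star (antipode C h)))) := by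
  ext x
  simp [antipode_mul_antidistrib]

theorem IsConvGL.dagger {α : A →ₐ[C] WithConv (H →ₗ[C] A)}
    (hΔ : ∀ g : H, comul (R := C) (star g) = star (comul g))
    (hα : ∀ b, _root_.dagger (α b) = α (star b)) {F : WithConv (H →ₗ[C] A)}
    (hF : IsConvGL α F) : IsConvGL α (_root_.dagger F) := by
  have hcomm (b : A) : Commute (α b) (_root_.dagger F) := by
    have := congrArg _root_.dagger (hF.commute (star b)).eq
    rw [dagger_mul hΔ, dagger_mul hΔ, hα, star_star] at this
    exact this.symm
  refine ⟨by simp [hF.map_one], fun h => ?_, hcomm⟩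
  rw [dagger_comp_mulRight, hF.comp_mulRight, dagger_mul hΔ, hα]
  exact (hcomm _).eq

end Dagger

section Inverse

variable {C H A : Type*} [CommSemiring C] [Semiring H] [HopfAlgebra C H] [Semiring A]
  [Algebra C A]

theorem SweedlerRep.sum_map_snd_mul_eq (Δ : SweedlerRep C H) {σ : H →ₗ[C] H}
    (hσ : ∀ x, σ (antipode C x) = x) (hσ' : ∀ x, antipode C (σ x) = x) (x : H) :
    ((Δ.rep x).map fun p => p.2 * σ p.1).sum = algebraMap C H (counit x) := by
  have σ_mul (a b : H) : σ (a * b) = σ b * σ a := by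
    conv_lhs => rw [← hσ' a, ← hσ' b, ← antipode_mul_antidistrib, hσ]
  have σ_one : σ 1 = 1 := by simpa using hσ 1
  have mul_antipode := Δ.sum_map_mul_eq_convMul (toConv LinearMap.id) (toConv (antipode C)) x
  rw [LinearMap.id_mul_antipode] at mul_antipode
  simp only [LinearMap.id_apply] at mul_antipode
  calc _ = ((Δ.rep x).map fun p => σ (p.1 * antipode C p.2)).sum := by simp [σ_mul, hσ]
    _ = σ ((Δ.rep x).map fun p => p.1 * antipode C p.2).sum := by
        rw [map_list_sum, List.map_map]; rfl
    _ = _ := by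
        rw [mul_antipode, LinearMap.convOne_apply, Algebra.algebraMap_eq_smul_one, map_smul,
          σ_one]

/-- `convInv` as an element of the convolution algebra, for a linear `σ = S⁻¹`. -/
noncomputable def linearConvInv (α : A →ₐ[C] WithConv (H →ₗ[C] A)) (σ : H →ₗ[C] H)
    (F : WithConv (H →ₗ[C] A)) : WithConv (H →ₗ[C] A) :=
  toConv (lift ((WithConv.linearEquiv C _).toLinearMap ∘ₗ α.toLinearMap ∘ₗ F.ofConv ∘ₗ σ) ∘ₗ
    comul)

theorem SweedlerRep.linearConvInv_apply (Δ : SweedlerRep C H)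
    (α : A →ₐ[C] WithConv (H →ₗ[C] A)) (σ : H →ₗ[C] H) (F : WithConv (H →ₗ[C] A)) (x : H) :
    linearConvInv α σ F x = ((Δ.rep x).map fun p => α (F (σ p.1)) p.2).sum :=
  (Δ.sum_map_eq_lift _ x).symm

/-- Coassociativity, then the module and the action conditions, turn `(a⁻¹ ⋆ a)(g)` into
`a(g₂ S⁻¹(g₁))`. -/
theorem IsConvGL.linearConvInv_mul (Δ : SweedlerRep C H) {α : A →ₐ[C] WithConv (H →ₗ[C] A)}
    {F : WithConv (H →ₗ[C] A)} (hF : IsConvGL α F) {σ : H →ₗ[C] H}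
    (hσ : ∀ x, σ (antipode C x) = x) (hσ' : ∀ x, antipode C (σ x) = x) :
    linearConvInv α σ F * F = 1 := by
  ext x
  have coassoc := Δ.sum_sum_mul_eq_sum_convMul
    ((WithConv.linearEquiv C _).toLinearMap ∘ₗ α.toLinearMap ∘ₗ F.ofConv ∘ₗ σ) F x
  simp only [LinearMap.comp_apply, LinearEquiv.coe_coe, WithConv.linearEquiv_apply,
    AlgHom.toLinearMap_apply, toConv_ofConv] at coassoc
  have commute (b : A) : α b * F = F * α b := (hF.commute b).eq
  rw [← Δ.sum_map_mul_eq_convMul,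
    List.map_congr_left fun p _ => by rw [Δ.linearConvInv_apply α σ F p.1], coassoc]
  simp_rw [commute, ← hF.comp_mulRight, LinearMap.comp_apply, LinearMap.mulRight_apply]
  refine (List.sum_map_hom _ (fun p : H × H => p.2 * σ p.1) F.ofConv).trans ?_
  rw [Δ.sum_map_snd_mul_eq hσ hσ', LinearMap.convOne_apply, Algebra.algebraMap_eq_smul_one,
    map_smul, hF.map_one, Algebra.algebraMap_eq_smul_one]

end Inverse

theorem memGL_iff {C H A : Type*} [CommRing C] [Ring H] [HopfAlgebra C H] [Ring A] [Algebra C A]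
    (Δ : SweedlerRep C H) {act : H → A → A} {α : A →ₐ[C] WithConv (H →ₗ[C] A)}
    (hact : ∀ g b, act g b = α b g) (F : WithConv (H →ₗ[C] A)) :
    memGL Δ act F ↔ IsConvGL α F := by
  simp only [memGL, hact, Δ.sum_map_mul_eq_convMul]
  constructor
  · rintro ⟨-, map_one, map_mul, commute⟩
    exact ⟨map_one, fun h => by ext g; exact map_mul g h, fun b => by ext g; exact commute g b⟩
  · rintro ⟨map_one, comp_mulRight, commute⟩
    exact ⟨F.ofConv.isLinear, map_one, fun g h => congr($(comp_mulRight h) g),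
      fun g b => congr($((commute b).eq) g)⟩

section Unitary

variable {C H A : Type*} [CommRing C] [StarRing C] [Ring H] [HopfAlgebra C H] [StarRing H]
  [StarModule C H] [Ring A] [Algebra C A] [StarRing A] [StarModule C A]
  (Δ : SweedlerRep C H) {act : H → A → A} {α : A →ₐ[C] WithConv (H →ₗ[C] A)}

theorem memU_iff (hact : ∀ g b, act g b = α b g) (F : WithConv (H →ₗ[C] A)) :
    memU Δ act F ↔ IsConvGL α F ∧ F * dagger F = 1 := by
  have unitary_sum (g : H) :
      ((Δ.rep g).map fun p => F p.1 * star (F (star (antipode C p.2)))).sum = (F * dagger F) g :=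
    Δ.sum_map_mul_eq_convMul F (dagger F) g
  simp only [memU, memGL_iff Δ hact, unitary_sum, WithConv.ext_iff, LinearMap.ext_iff,
    LinearMap.convOne_apply, Algebra.algebraMap_eq_smul_one]

theorem exists_of_memU {a : H → A} (ha : memU Δ act a) :
    ∃ F : WithConv (H →ₗ[C] A), ⇑F = a :=
  ⟨toConv (IsLinearMap.mk' a ha.1.1), rfl⟩

theorem memU_convUnit (hact : ∀ g b, act g b = α b g)
    (hcounit_star : ∀ g : H, counit (R := C) (star g) = star (counit (R := C) g)) :
    memU Δ act (convUnit C A) := by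
  have : convUnit C A = ⇑(1 : WithConv (H →ₗ[C] A)) :=
    funext fun g => (Algebra.algebraMap_eq_smul_one _).symm
  rw [this, memU_iff Δ hact]
  exact ⟨isConvGL_one, by rw [dagger_one hcounit_star, one_mul]⟩

theorem memU_conv (hact : ∀ g b, act g b = α b g)
    (hcomul_star : ∀ g : H, comul (R := C) (star g) = star (comul g)) {a b : H → A}
    (ha : memU Δ act a) (hb : memU Δ act b) : memU Δ act (conv Δ a b) := by
  obtain ⟨F, rfl⟩ := exists_of_memU Δ ha
  obtain ⟨G, rfl⟩ := exists_of_memU Δ hb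
  obtain ⟨hF, hFu⟩ := (memU_iff Δ hact F).1 ha
  obtain ⟨hG, hGu⟩ := (memU_iff Δ hact G).1 hb
  rw [show conv Δ F G = ⇑(F * G) from funext (Δ.sum_map_mul_eq_convMul F G), memU_iff Δ hact]
  refine ⟨hF.mul Δ hG, ?_⟩
  rw [dagger_mul hcomul_star, mul_assoc, ← mul_assoc G, hGu, one_mul, hFu]

theorem memU_convInv (hact : ∀ g b, act g b = α b g)
    (hcomul_star : ∀ g : H, comul (R := C) (star g) = star (comul g))
    (hS : ∀ g : H, star (antipode C (star (antipode C g))) = g)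
    (hα : ∀ b, dagger (α b) = α (star b)) {Sinv : H → H}
    (hSinv₁ : ∀ g : H, Sinv (antipode C g) = g) (hSinv₂ : ∀ g : H, antipode C (Sinv g) = g)
    {a : H → A} (ha : memU Δ act a) : memU Δ act (convInv Δ act Sinv a) := by
  obtain ⟨F, rfl⟩ := exists_of_memU Δ ha
  obtain ⟨hF, hFu⟩ := (memU_iff Δ hact F).1 ha
  let e : H ≃ₗ[C] H :=
    { antipode C with invFun := Sinv, left_inv := hSinv₁, right_inv := hSinv₂ }
  have inv_mul := hF.linearConvInv_mul Δ (σ := e.symm.toLinearMap) hSinv₁ hSinv₂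
  have inv_eq : linearConvInv α e.symm F = dagger F := left_inv_eq_right_inv inv_mul hFu
  have : convInv Δ act Sinv F = ⇑(dagger F) := by
    rw [← inv_eq]
    funext g
    simp only [convInv, hact, Δ.linearConvInv_apply]
    rfl
  rw [this, memU_iff Δ hact]
  exact ⟨hF.dagger hcomul_star hα, by rw [dagger_dagger hS, ← inv_eq, inv_mul]⟩

end Unitary

theorem memU_subgroup_general
    {C H A : Type*} [CommRing C] [StarRing C]
    [Ring H] [HopfAlgebra C H] [StarRing H] [StarModule C H]
    [Ring A] [Algebra C A] [StarRing A] [StarModule C A]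
    (Δ : SweedlerRep C H)
    -- Hopf `*`-algebra conditions
    (hcomul_star : ∀ g : H, Coalgebra.comul (R := C) (star g)
      = ((Δ.rep g).map fun p => star p.1 ⊗ₜ[C] star p.2).sum)
    (hcounit_star : ∀ g : H,
      Coalgebra.counit (R := C) (star g) = star (Coalgebra.counit (R := C) g))
    (hS : ∀ g : H,
      star (HopfAlgebra.antipode (R := C)
        (star (HopfAlgebra.antipode (R := C) g))) = g)
    -- the antipode is invertible with inverse `Sinv`
    (Sinv : H → H)
    (hSinv₁ : ∀ g : H, Sinv (HopfAlgebra.antipode (R := C) g) = g)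
    (hSinv₂ : ∀ g : H, HopfAlgebra.antipode (R := C) (Sinv g) = g)
    -- `act` is a `*`-action of `H` on the unital `*`-algebra `A`
    (act : H → A → A)
    (hact_lin : ∀ a : A, IsLinearMap C fun g => act g a)
    (hact_linA : ∀ g : H, IsLinearMap C (act g))
    (hact_alg : ∀ (g : H) (a b : A), act g (a * b) =
      ((Δ.rep g).map fun p => act p.1 a * act p.2 b).sum)
    (hact_star : ∀ g a, star (act g a) =
      act (star (HopfAlgebra.antipode (R := C) g)) (star a))
    (hact_unit : ∀ g : H, act g (1 : A) = Coalgebra.counit (R := C) g • (1 : A)) :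
    memU Δ act (convUnit C A) ∧
    (∀ a b : H → A, memU Δ act a → memU Δ act b → memU Δ act (conv Δ a b)) ∧
    (∀ a : H → A, memU Δ act a → memU Δ act (convInv Δ act Sinv a)) := by
  let α := Δ.actionAlgHom act hact_lin hact_linA hact_alg hact_unit
  have hact : ∀ g b, act g b = α b g := fun _ _ => rfl
  have hΔ : ∀ g : H, comul (R := C) (star g) = star (comul g) := fun g => by
    have := map_list_sum (starAddEquiv (R := H ⊗[C] H)) ((Δ.rep g).map fun p => p.1 ⊗ₜ[C] p.2)
    simpa [hcomul_star, ← Δ.rep_spec, Function.comp_def] using this.symm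
  have hα : ∀ b, dagger (α b) = α (star b) := fun b => by
    ext g
    simp [← hact, hact_star, hS]
  exact ⟨memU_convUnit Δ hact hcounit_star, fun a b => memU_conv Δ hact hΔ,
    fun a => memU_convInv Δ hact hΔ hS hα hSinv₁ hSinv₂⟩

/-- `U(H, A)` is a subgroup of `GL(H, A)`: it contains the unit and is
closed under convolution and under inversion. -/
theorem memU_subgroup
    {C H A : Type*} [CommRing C] [StarRing C]
    [Ring H] [HopfAlgebra C H] [StarRing H] [StarModule C H]
    [Ring A] [Algebra C A] [StarRing A] [StarModule C A]
    (Δ : SweedlerRep C H)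
    -- Hopf `*`-algebra conditions
    (hcomul_star : ∀ g : H, Coalgebra.comul (R := C) (star g)
      = ((Δ.rep g).map fun p => star p.1 ⊗ₜ[C] star p.2).sum)
    (hcounit_star : ∀ g : H,
      Coalgebra.counit (R := C) (star g) = star (Coalgebra.counit (R := C) g))
    (hS : ∀ g : H,
      star (HopfAlgebra.antipode (R := C)
        (star (HopfAlgebra.antipode (R := C) g))) = g)
    -- the antipode is invertible with inverse `Sinv`
    (Sinv : H → H)
    (hSinv₁ : ∀ g : H, Sinv (HopfAlgebra.antipode (R := C) g) = g)
    (hSinv₂ : ∀ g : H, HopfAlgebra.antipode (R := C) (Sinv g) = g)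
    -- `act` is a `*`-action of `H` on the unital `*`-algebra `A`
    (act : H → A → A)
    (hact_one : ∀ a, act 1 a = a)
    (hact_mulH : ∀ g h a, act (g * h) a = act g (act h a))
    (hact_lin : ∀ a : A, IsLinearMap C fun g => act g a)
    (hact_linA : ∀ g : H, IsLinearMap C (act g))
    (hact_alg : ∀ (g : H) (a b : A), act g (a * b) =
      ((Δ.rep g).map fun p => act p.1 a * act p.2 b).sum)
    (hact_star : ∀ g a, star (act g a) =
      act (star (HopfAlgebra.antipode (R := C) g)) (star a))
    (hact_unit : ∀ g : H, act g (1 : A) = Coalgebra.counit (R := C) g • (1 : A)) :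
    memU Δ act (convUnit C A) ∧
    (∀ a b : H → A, memU Δ act a → memU Δ act b → memU Δ act (conv Δ a b)) ∧
    (∀ a : H → A, memU Δ act a → memU Δ act (convInv Δ act Sinv a)) :=
  memU_subgroup_general Δ hcomul_star hcounit_star hS Sinv hSinv₁ hSinv₂ act hact_lin hact_linA
    hact_alg hact_star hact_unit
end

section
/- For an invertible central element c of A, the map ĉ(g) = c (g ▷ c⁻¹) belongs to GL(H, A); the assignment c ↦ ĉ is a group homomorphism from the invertible central elements GL(Z(A)) to GL(H, A) whose kernel is exactly the H-invariant invertible central elements, and the image of ĉ lies in the center of the group GL(H, A). -/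
open scoped TensorProduct

section Aux

variable {C H M : Type*} [CommRing C] [Ring H] [HopfAlgebra C H]
  [AddCommGroup M] [Module C M]

lemma SweedlerRep.sum_map_lift (Δ : SweedlerRep C H) (F : H ⊗[C] H →ₗ[C] M) (g : H) :
    ((Δ.rep g).map fun p => F (p.1 ⊗ₜ[C] p.2)).sum = F (Coalgebra.comul (R := C) g) := by
  rw [Δ.rep_spec, map_list_sum, List.map_map]; rfl

lemma SweedlerRep.rep_counit_left (Δ : SweedlerRep C H) (φ : H →ₗ[C] M) (g : H) :
    ((Δ.rep g).map fun p => Coalgebra.counit (R := C) p.1 • φ p.2).sum = φ g := by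
  have := Δ.sum_map_lift (φ ∘ₗ (TensorProduct.lid C H).toLinearMap ∘ₗ
    (Coalgebra.counit (R := C)).rTensor H) g
  simpa using this

lemma SweedlerRep.rep_counit_right (Δ : SweedlerRep C H) (φ : H →ₗ[C] M) (g : H) :
    ((Δ.rep g).map fun p => Coalgebra.counit (R := C) p.2 • φ p.1).sum = φ g := by
  have := Δ.sum_map_lift (φ ∘ₗ (TensorProduct.rid C H).toLinearMap ∘ₗ
    (Coalgebra.counit (R := C)).lTensor H) g
  simpa using this

lemma SweedlerRep.rep_coassoc (Δ : SweedlerRep C H) (F : H ⊗[C] (H ⊗[C] H) →ₗ[C] M) (g : H) :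
    ((Δ.rep g).map fun p =>
        ((Δ.rep p.2).map fun q => F (p.1 ⊗ₜ[C] (q.1 ⊗ₜ[C] q.2))).sum).sum
      = ((Δ.rep g).map fun p =>
        ((Δ.rep p.1).map fun q => F (q.1 ⊗ₜ[C] (q.2 ⊗ₜ[C] p.2))).sum).sum := by
  have hL : ∀ p : H × H,
      ((Δ.rep p.2).map fun q => F (p.1 ⊗ₜ[C] (q.1 ⊗ₜ[C] q.2))).sum
        = (F ∘ₗ (Coalgebra.comul (R := C)).lTensor H) (p.1 ⊗ₜ[C] p.2) := by
    intro p
    have := Δ.sum_map_lift (F ∘ₗ TensorProduct.mk C H (H ⊗[C] H) p.1) p.2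
    simpa using this
  have hR : ∀ p : H × H,
      ((Δ.rep p.1).map fun q => F (q.1 ⊗ₜ[C] (q.2 ⊗ₜ[C] p.2))).sum
        = (F ∘ₗ (TensorProduct.assoc C H H H).toLinearMap ∘ₗ
            (Coalgebra.comul (R := C)).rTensor H) (p.1 ⊗ₜ[C] p.2) := by
    intro p
    have := Δ.sum_map_lift (F ∘ₗ (TensorProduct.assoc C H H H).toLinearMap ∘ₗ
      (TensorProduct.mk C (H ⊗[C] H) H).flip p.2) p.1
    simpa using this
  calc ((Δ.rep g).map fun p =>
        ((Δ.rep p.2).map fun q => F (p.1 ⊗ₜ[C] (q.1 ⊗ₜ[C] q.2))).sum).sum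
      = (F ∘ₗ (Coalgebra.comul (R := C)).lTensor H) (Coalgebra.comul (R := C) g) := by
        simp only [hL]; exact Δ.sum_map_lift _ g
    _ = (F ∘ₗ (TensorProduct.assoc C H H H).toLinearMap ∘ₗ
            (Coalgebra.comul (R := C)).rTensor H) (Coalgebra.comul (R := C) g) := by
        simp [Coalgebra.coassoc_apply]
    _ = _ := by simp only [hR]; exact (Δ.sum_map_lift _ g).symm

variable {A : Type*} [Ring A] [Algebra C A]

/-- Coassociativity for sums of triple products of linear maps. -/
lemma SweedlerRep.rep_coassoc_mul (Δ : SweedlerRep C H) (f1 f2 f3 : H →ₗ[C] A) (g : H) :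
    ((Δ.rep g).map fun p =>
        f1 p.1 * ((Δ.rep p.2).map fun q => f2 q.1 * f3 q.2).sum).sum
      = ((Δ.rep g).map fun p =>
        ((Δ.rep p.1).map fun q => f1 q.1 * f2 q.2).sum * f3 p.2).sum := by
  have h := Δ.rep_coassoc ((LinearMap.mul' C A) ∘ₗ TensorProduct.map f1
    ((LinearMap.mul' C A) ∘ₗ TensorProduct.map f2 f3)) g
  simp only [LinearMap.coe_comp, Function.comp_apply, TensorProduct.map_tmul,
    LinearMap.mul'_apply] at h
  calc ((Δ.rep g).map fun p =>
        f1 p.1 * ((Δ.rep p.2).map fun q => f2 q.1 * f3 q.2).sum).sum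
      = ((Δ.rep g).map fun p =>
        ((Δ.rep p.2).map fun q => f1 p.1 * (f2 q.1 * f3 q.2)).sum).sum := by
        congr 1
        exact List.map_congr_left fun p _ => by rw [List.sum_map_mul_left]
    _ = ((Δ.rep g).map fun p =>
        ((Δ.rep p.1).map fun q => f1 q.1 * (f2 q.2 * f3 p.2)).sum).sum := h
    _ = _ := by
        congr 1
        refine List.map_congr_left fun p _ => ?_
        rw [← List.sum_map_mul_right]
        congr 1
        exact List.map_congr_left fun q _ => (mul_assoc _ _ _).symm

end Aux


/-- For an invertible central element `c` of `A`, the map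
`ĉ(g) = c (g ▷ c⁻¹)` belongs to `GL(H, A)`; `c ↦ ĉ` is a group homomorphism from the
invertible central elements to `GL(H, A)`, its kernel is exactly the `H`-invariant
invertible central elements, and its image lies in the center of `GL(H, A)`. -/
theorem central_unit_hat
    {C H A : Type*} [CommRing C] [StarRing C]
    [Ring H] [HopfAlgebra C H] [StarRing H] [StarModule C H]
    [Ring A] [Algebra C A] [StarRing A] [StarModule C A]
    (Δ : SweedlerRep C H)
    -- `act` is a `*`-action of `H` on the unital `*`-algebra `A`
    (act : H → A → A)
    (hact_one : ∀ a, act 1 a = a)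
    (hact_mulH : ∀ g h a, act (g * h) a = act g (act h a))
    (hact_lin : ∀ a : A, IsLinearMap C fun g => act g a)
    (hact_linA : ∀ g : H, IsLinearMap C (act g))
    (hact_alg : ∀ (g : H) (a b : A), act g (a * b) =
      ((Δ.rep g).map fun p => act p.1 a * act p.2 b).sum)
    (hact_star : ∀ g a, star (act g a) =
      act (star (HopfAlgebra.antipode (R := C) g)) (star a))
    (hact_unit : ∀ g : H, act g (1 : A) = Coalgebra.counit (R := C) g • (1 : A)) :
    -- `ĉ ∈ GL(H, A)` for every invertible central `c`
    (∀ c : Aˣ, (∀ b : A, (c : A) * b = b * c) →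
      memGL Δ act (fun g => (c : A) * act g ((c⁻¹ : Aˣ) : A))) ∧
    -- `c ↦ ĉ` is a group homomorphism
    (∀ c d : Aˣ, (∀ b : A, (c : A) * b = b * c) → (∀ b : A, (d : A) * b = b * d) →
      (fun g => ((c * d : Aˣ) : A) * act g (((c * d)⁻¹ : Aˣ) : A))
        = conv Δ (fun g => (c : A) * act g ((c⁻¹ : Aˣ) : A))
            (fun g => (d : A) * act g ((d⁻¹ : Aˣ) : A))) ∧
    -- its kernel consists exactly of the `H`-invariant invertible central elements
    (∀ c : Aˣ, (∀ b : A, (c : A) * b = b * c) →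
      ((fun g => (c : A) * act g ((c⁻¹ : Aˣ) : A)) = convUnit C A ↔
        ∀ g : H, act g (c : A) = Coalgebra.counit (R := C) g • (c : A))) ∧
    -- the image of `c ↦ ĉ` is central in `GL(H, A)`
    (∀ (c : Aˣ) (a : H → A), (∀ b : A, (c : A) * b = b * c) → memGL Δ act a →
      conv Δ a (fun g => (c : A) * act g ((c⁻¹ : Aˣ) : A))
        = conv Δ (fun g => (c : A) * act g ((c⁻¹ : Aˣ) : A)) a) := by
  -- linear map given by the action on a fixed element
  let actL : A → (H →ₗ[C] A) := fun b => IsLinearMap.mk' _ (hact_lin b)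
  have actL_apply : ∀ (b : A) (g : H), actL b g = act g b := fun _ _ => rfl
  -- centrality of the inverse
  have hinv : ∀ c : Aˣ, (∀ b : A, (c : A) * b = b * c) →
      ∀ b : A, ((c⁻¹ : Aˣ) : A) * b = b * ((c⁻¹ : Aˣ) : A) := by
    intro c hc b
    calc ((c⁻¹ : Aˣ) : A) * b
        = ((c⁻¹ : Aˣ) : A) * ((b * (c : A)) * ((c⁻¹ : Aˣ) : A)) := by
          rw [mul_assoc, Units.mul_inv, mul_one]
      _ = ((c⁻¹ : Aˣ) : A) * (((c : A) * b) * ((c⁻¹ : Aˣ) : A)) := by rw [hc b]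
      _ = b * ((c⁻¹ : Aˣ) : A) := by
          rw [← mul_assoc, ← mul_assoc, Units.inv_mul, one_mul]
  -- Part 1 : membership in GL(H, A)
  have part1 : ∀ c : Aˣ, (∀ b : A, (c : A) * b = b * c) →
      memGL Δ act (fun g => (c : A) * act g ((c⁻¹ : Aˣ) : A)) := by
    intro c hc
    set cv : A := ((c⁻¹ : Aˣ) : A) with hcv
    refine ⟨⟨fun g h => by rw [(hact_lin cv).map_add, mul_add],
        fun r g => by rw [(hact_lin cv).map_smul, mul_smul_comm]⟩, ?_, ?_, ?_⟩
    · show (c : A) * act 1 cv = 1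
      rw [hact_one]; exact Units.mul_inv c
    · -- action condition
      intro g h
      show (c : A) * act (g * h) cv
        = ((Δ.rep g).map fun p => (c : A) * act p.1 cv * act p.2 ((c : A) * act h cv)).sum
      have step1 : ∀ p : H × H, act p.2 ((c : A) * act h cv)
          = ((Δ.rep p.2).map fun q => actL (c : A) q.1 * (actL cv ∘ₗ
              LinearMap.mulRight C h) q.2).sum := by
        intro p
        rw [hact_alg]
        congr 1
        refine List.map_congr_left fun q _ => ?_
        simp only [LinearMap.coe_comp, Function.comp_apply, LinearMap.mulRight_apply,
          actL_apply, ← hact_mulH]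
      have key := Δ.rep_coassoc_mul
        (LinearMap.mulLeft C (c : A) ∘ₗ actL cv) (actL (c : A))
        (actL cv ∘ₗ LinearMap.mulRight C h) g
      have inner : ∀ p : H × H,
          ((Δ.rep p.1).map fun q => (LinearMap.mulLeft C (c : A) ∘ₗ actL cv) q.1
              * actL (c : A) q.2).sum
            = Coalgebra.counit (R := C) p.1 • (c : A) := by
        intro p
        have : ((Δ.rep p.1).map fun q => (LinearMap.mulLeft C (c : A) ∘ₗ actL cv) q.1
              * actL (c : A) q.2).sum
            = (c : A) * ((Δ.rep p.1).map fun q => act q.1 cv * act q.2 (c : A)).sum := by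
          rw [← List.sum_map_mul_left]
          congr 1
          refine List.map_congr_left fun q _ => ?_
          simp [mul_assoc, actL_apply]
        rw [this, ← hact_alg, Units.inv_mul, hact_unit, mul_smul_comm, mul_one]
      calc (c : A) * act (g * h) cv
          = (LinearMap.mulLeft C (c : A) ∘ₗ (actL cv ∘ₗ LinearMap.mulRight C h)) g := rfl
        _ = ((Δ.rep g).map fun p => Coalgebra.counit (R := C) p.1 •
              (LinearMap.mulLeft C (c : A) ∘ₗ (actL cv ∘ₗ LinearMap.mulRight C h)) p.2).sum :=
            (Δ.rep_counit_left _ g).symm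
        _ = ((Δ.rep g).map fun p =>
              ((Δ.rep p.1).map fun q => (LinearMap.mulLeft C (c : A) ∘ₗ actL cv) q.1
                * actL (c : A) q.2).sum * (actL cv ∘ₗ LinearMap.mulRight C h) p.2).sum := by
            congr 1
            refine List.map_congr_left fun p _ => ?_
            rw [inner p, smul_mul_assoc]
            rfl
        _ = ((Δ.rep g).map fun p => (LinearMap.mulLeft C (c : A) ∘ₗ actL cv) p.1 *
              ((Δ.rep p.2).map fun q => actL (c : A) q.1 * (actL cv ∘ₗ
                LinearMap.mulRight C h) q.2).sum).sum := key.symm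
        _ = ((Δ.rep g).map fun p => (c : A) * act p.1 cv
              * act p.2 ((c : A) * act h cv)).sum := by
            congr 1
            refine List.map_congr_left fun p _ => ?_
            rw [step1 p]
            rfl
    · -- module condition
      intro g b
      show ((Δ.rep g).map fun p => act p.1 b * ((c : A) * act p.2 cv)).sum
        = ((Δ.rep g).map fun p => (c : A) * act p.1 cv * act p.2 b).sum
      calc ((Δ.rep g).map fun p => act p.1 b * ((c : A) * act p.2 cv)).sum
          = (c : A) * ((Δ.rep g).map fun p => act p.1 b * act p.2 cv).sum := by
            rw [← List.sum_map_mul_left]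
            congr 1
            refine List.map_congr_left fun p _ => ?_
            rw [← mul_assoc, ← hc (act p.1 b), mul_assoc]
        _ = (c : A) * act g (b * cv) := by rw [hact_alg]
        _ = (c : A) * act g (cv * b) := by rw [hinv c hc b]
        _ = (c : A) * ((Δ.rep g).map fun p => act p.1 cv * act p.2 b).sum := by rw [hact_alg]
        _ = ((Δ.rep g).map fun p => (c : A) * act p.1 cv * act p.2 b).sum := by
            rw [← List.sum_map_mul_left]
            congr 1
            refine List.map_congr_left fun p _ => by rw [mul_assoc]
  refine ⟨part1, ?_, ?_, ?_⟩
  · -- Part 2 : group homomorphism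
    intro c d hc hd
    funext g
    have hdc : ((d⁻¹ : Aˣ) : A) * ((c⁻¹ : Aˣ) : A) = ((c⁻¹ : Aˣ) : A) * ((d⁻¹ : Aˣ) : A) :=
      (hinv c hc _).symm
    calc ((c * d : Aˣ) : A) * act g (((c * d)⁻¹ : Aˣ) : A)
        = (c : A) * (d : A) * act g (((c⁻¹ : Aˣ) : A) * ((d⁻¹ : Aˣ) : A)) := by
          rw [mul_inv_rev]
          push_cast
          rw [hdc]
      _ = (c : A) * (d : A) *
            ((Δ.rep g).map fun p => act p.1 ((c⁻¹ : Aˣ) : A) * act p.2 ((d⁻¹ : Aˣ) : A)).sum := by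
          rw [hact_alg]
      _ = conv Δ (fun g => (c : A) * act g ((c⁻¹ : Aˣ) : A))
            (fun g => (d : A) * act g ((d⁻¹ : Aˣ) : A)) g := by
          unfold conv
          rw [← List.sum_map_mul_left]
          congr 1
          refine List.map_congr_left fun p _ => ?_
          calc (c : A) * (d : A) * (act p.1 ((c⁻¹ : Aˣ) : A) * act p.2 ((d⁻¹ : Aˣ) : A))
              = (c : A) * ((d : A) * act p.1 ((c⁻¹ : Aˣ) : A)) * act p.2 ((d⁻¹ : Aˣ) : A) := by
                rw [mul_assoc, mul_assoc, mul_assoc]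
            _ = (c : A) * act p.1 ((c⁻¹ : Aˣ) : A) * ((d : A) * act p.2 ((d⁻¹ : Aˣ) : A)) := by
                rw [hd (act p.1 ((c⁻¹ : Aˣ) : A))]
                rw [mul_assoc, mul_assoc, mul_assoc]
  · -- Part 3 : kernel
    intro c hc
    constructor
    · intro hker g
      have h1 : ∀ g : H, (c : A) * act g ((c⁻¹ : Aˣ) : A)
          = Coalgebra.counit (R := C) g • (1 : A) := fun g => congrFun hker g
      have h2 : ∀ g : H, act g ((c⁻¹ : Aˣ) : A)
          = Coalgebra.counit (R := C) g • ((c⁻¹ : Aˣ) : A) := by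
        intro g
        have := congrArg (fun x => ((c⁻¹ : Aˣ) : A) * x) (h1 g)
        simpa [← mul_assoc, Units.inv_mul, mul_smul_comm] using this
      -- now recover act g c using the counit-right identity
      have h3 : act g ((c : A) * ((c⁻¹ : Aˣ) : A)) = Coalgebra.counit (R := C) g • (1 : A) := by
        rw [Units.mul_inv]; exact hact_unit g
      have h4 : ((Δ.rep g).map fun p => act p.1 (c : A) * act p.2 ((c⁻¹ : Aˣ) : A)).sum
          = act g (c : A) * ((c⁻¹ : Aˣ) : A) := by
        have : ((Δ.rep g).map fun p => act p.1 (c : A) * act p.2 ((c⁻¹ : Aˣ) : A)).sum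
            = ((Δ.rep g).map fun p => Coalgebra.counit (R := C) p.2 •
                ((LinearMap.mulRight C ((c⁻¹ : Aˣ) : A)) ∘ₗ actL (c : A)) p.1).sum := by
          congr 1
          refine List.map_congr_left fun p _ => ?_
          rw [h2 p.2]
          simp [mul_smul_comm, actL_apply]
        rw [this, Δ.rep_counit_right]
        rfl
      have h5 : act g (c : A) * ((c⁻¹ : Aˣ) : A) = Coalgebra.counit (R := C) g • (1 : A) := by
        rw [← h4, ← hact_alg, h3]
      have := congrArg (fun x => x * (c : A)) h5
      simpa [mul_assoc, Units.inv_mul, smul_mul_assoc] using this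
    · intro hinvariant
      funext g
      have : ((Δ.rep g).map fun p => act p.1 (c : A) * act p.2 ((c⁻¹ : Aˣ) : A)).sum
          = (c : A) * act g ((c⁻¹ : Aˣ) : A) := by
        have : ((Δ.rep g).map fun p => act p.1 (c : A) * act p.2 ((c⁻¹ : Aˣ) : A)).sum
            = ((Δ.rep g).map fun p => Coalgebra.counit (R := C) p.1 •
                ((LinearMap.mulLeft C (c : A)) ∘ₗ actL ((c⁻¹ : Aˣ) : A)) p.2).sum := by
          congr 1
          refine List.map_congr_left fun p _ => ?_
          rw [hinvariant p.1]
          simp [smul_mul_assoc, actL_apply]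
        rw [this, Δ.rep_counit_left]
        rfl
      rw [← this, ← hact_alg, Units.mul_inv, hact_unit]
      rfl
  · -- Part 4 : centrality
    intro c a hc ha
    funext g
    unfold conv
    calc ((Δ.rep g).map fun p => a p.1 * ((c : A) * act p.2 ((c⁻¹ : Aˣ) : A))).sum
        = (c : A) * ((Δ.rep g).map fun p => a p.1 * act p.2 ((c⁻¹ : Aˣ) : A)).sum := by
          rw [← List.sum_map_mul_left]
          congr 1
          refine List.map_congr_left fun p _ => ?_
          rw [← mul_assoc, ← hc (a p.1), mul_assoc]
      _ = (c : A) * ((Δ.rep g).map fun p => act p.1 ((c⁻¹ : Aˣ) : A) * a p.2).sum := by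
          rw [ha.2.2.2 g ((c⁻¹ : Aˣ) : A)]
      _ = ((Δ.rep g).map fun p => (c : A) * act p.1 ((c⁻¹ : Aˣ) : A) * a p.2).sum := by
          rw [← List.sum_map_mul_left]
          congr 1
          refine List.map_congr_left fun p _ => by rw [mul_assoc]
end

section
/- If c is a unitary central element of A (c* = c⁻¹), then ĉ(g) = c (g ▷ c⁻¹) satisfies the unitarity condition ĉ(g₍₁₎)(ĉ(S(g₍₂₎)*))* = ε(g)1_A, i.e. ĉ ∈ U(H, A). -/
open scoped TensorProduct

theorem star_act_star_antipode_star {C H A : Type*} [CommSemiring C] [Semiring H]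
    [HopfAlgebra C H] [Star H] [InvolutiveStar A] (act : H → A → A)
    (hS : ∀ g : H,
      star (HopfAlgebra.antipode (R := C) (star (HopfAlgebra.antipode (R := C) g))) = g)
    (hact_star : ∀ g a, star (act g a) = act (star (HopfAlgebra.antipode (R := C) g)) (star a))
    (g : H) (a : A) :
    star (act (star (HopfAlgebra.antipode (R := C) g)) (star a)) = act g a := by
  rw [hact_star, star_star, hS]

theorem SweedlerRep.sum_act_mul_act_of_mul_eq_one {C H A : Type*} [CommSemiring C]
    [AddCommMonoid H] [Module C H] [CoalgebraStruct C H] [Semiring A] [Module C A]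
    (Δ : SweedlerRep C H) (act : H → A → A)
    (hact_alg : ∀ (g : H) (a b : A), act g (a * b) =
      ((Δ.rep g).map fun p => act p.1 a * act p.2 b).sum)
    (hact_unit : ∀ g : H, act g (1 : A) = Coalgebra.counit (R := C) g • (1 : A))
    {a b : A} (hab : a * b = 1) (g : H) :
    ((Δ.rep g).map fun p => act p.1 a * act p.2 b).sum = Coalgebra.counit (R := C) g • (1 : A) := by
  rw [← hact_alg, hab, hact_unit]

theorem central_unitary_hat_unitarity_general
    {C H A : Type*} [CommRing C]
    [Ring H] [HopfAlgebra C H] [StarRing H]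
    [Ring A] [Algebra C A] [StarRing A]
    (Δ : SweedlerRep C H)
    -- `S(S(g)*)* = g`
    (hS : ∀ g : H,
      star (HopfAlgebra.antipode (R := C)
        (star (HopfAlgebra.antipode (R := C) g))) = g)
    -- `act` is a `*`-action of `H` on the unital `*`-algebra `A`
    (act : H → A → A)
    (hact_alg : ∀ (g : H) (a b : A), act g (a * b) =
      ((Δ.rep g).map fun p => act p.1 a * act p.2 b).sum)
    (hact_star : ∀ g a, star (act g a) =
      act (star (HopfAlgebra.antipode (R := C) g)) (star a))
    (hact_unit : ∀ g : H, act g (1 : A) = Coalgebra.counit (R := C) g • (1 : A))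
    -- `c` is a unitary central element of `A`
    (c : A)
    (hc_unitary₁ : star c * c = 1)
    (hc_unitary₂ : c * star c = 1) :
    -- the unitarity condition for `ĉ(g) = c (g ▷ c*)`
    ∀ g : H,
      ((Δ.rep g).map fun p =>
          (c * act p.1 (star c)) *
            star (c * act (star (HopfAlgebra.antipode (R := C) p.2)) (star c))).sum
        = Coalgebra.counit (R := C) g • (1 : A) := by
  intro g
  calc ((Δ.rep g).map fun p =>
          (c * act p.1 (star c)) *
            star (c * act (star (HopfAlgebra.antipode (R := C) p.2)) (star c))).sum
      = ((Δ.rep g).map fun p => c * (act p.1 (star c) * act p.2 c) * star c).sum := by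
        congr 1
        refine List.map_congr_left fun p _ => ?_
        rw [star_mul, star_act_star_antipode_star act hS hact_star]
        simp only [mul_assoc]
    _ = c * ((Δ.rep g).map fun p => act p.1 (star c) * act p.2 c).sum * star c := by
        rw [List.sum_map_mul_right, List.sum_map_mul_left]
    _ = Coalgebra.counit (R := C) g • (1 : A) := by
        rw [Δ.sum_act_mul_act_of_mul_eq_one act hact_alg hact_unit hc_unitary₁, mul_smul_comm,
          smul_mul_assoc, mul_one, hc_unitary₂]

/-- If `c` is a unitary central element of `A` (`c* = c⁻¹`), then
`ĉ(g) = c (g ▷ c⁻¹) = c (g ▷ c*)` satisfies the unitarity condition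
`ĉ(g₍₁₎)(ĉ(S(g₍₂₎)*))* = ε(g)·1`, i.e. `ĉ ∈ U(H, A)`. -/
theorem central_unitary_hat_unitarity
    {C H A : Type*} [CommRing C] [StarRing C]
    [Ring H] [HopfAlgebra C H] [StarRing H] [StarModule C H]
    [Ring A] [Algebra C A] [StarRing A] [StarModule C A]
    (Δ : SweedlerRep C H)
    -- `S(S(g)*)* = g`
    (hS : ∀ g : H,
      star (HopfAlgebra.antipode (R := C)
        (star (HopfAlgebra.antipode (R := C) g))) = g)
    -- `act` is a `*`-action of `H` on the unital `*`-algebra `A`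
    (act : H → A → A)
    (hact_one : ∀ a, act 1 a = a)
    (hact_mulH : ∀ g h a, act (g * h) a = act g (act h a))
    (hact_lin : ∀ a : A, IsLinearMap C fun g => act g a)
    (hact_linA : ∀ g : H, IsLinearMap C (act g))
    (hact_alg : ∀ (g : H) (a b : A), act g (a * b) =
      ((Δ.rep g).map fun p => act p.1 a * act p.2 b).sum)
    (hact_star : ∀ g a, star (act g a) =
      act (star (HopfAlgebra.antipode (R := C) g)) (star a))
    (hact_unit : ∀ g : H, act g (1 : A) = Coalgebra.counit (R := C) g • (1 : A))
    -- `c` is a unitary central element of `A`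
    (c : A)
    (hc_unitary₁ : star c * c = 1)
    (hc_unitary₂ : c * star c = 1)
    (hc_central : ∀ b : A, c * b = b * c) :
    -- the unitarity condition for `ĉ(g) = c (g ▷ c*)`
    ∀ g : H,
      ((Δ.rep g).map fun p =>
          (c * act p.1 (star c)) *
            star (c * act (star (HopfAlgebra.antipode (R := C) p.2)) (star c))).sum
        = Coalgebra.counit (R := C) g • (1 : A) :=
  central_unitary_hat_unitarity_general Δ hS act hact_alg hact_star hact_unit c hc_unitary₁
    hc_unitary₂
end

section
/- For a cocommutative Hopf *-algebra H acting on a unital *-algebra A, every element a ∈ GL(H, A) takes values in the center of A: a(g) b = b a(g) for all g ∈ H and b ∈ A. -/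
open scoped TensorProduct

/-!
Cocommutativity lets one permute Sweedler legs freely, so coassociativity and the antipode
identity `g₍₁₎ S(g₍₂₎) = ε(g) 1` give `g₍₂₎ S(g₍₁₎) ⊗ g₍₃₎ = 1 ⊗ g` and
`g₍₂₎ ⊗ g₍₃₎ S(g₍₁₎) = g ⊗ 1`. Applying `x ⊗ y ↦ (x ▷ b) a(y)` to the first and
`x ⊗ y ↦ a(x) (y ▷ b)` to the second, with `b' = S(g₍₁₎) ▷ b`,
`b a(g) = (g₍₂₎ ▷ b') a(g₍₃₎)` and `a(g) b = a(g₍₂₎) (g₍₃₎ ▷ b')`,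
and the module condition for `g₍₂₎ ⊗ g₍₃₎` identifies the two.
-/

namespace TensorProduct

variable {R M N ι : Type*} [CommSemiring R] [AddCommMonoid M] [Module R M]
  [AddCommMonoid N] [Module R N]

theorem list_sum_tmul (l : List ι) (f : ι → M) (n : N) :
    (l.map f).sum ⊗ₜ[R] n = (l.map fun i => f i ⊗ₜ[R] n).sum := by
  induction l with
  | nil => simp
  | cons i l ih => simp [add_tmul, ih]

theorem tmul_list_sum (l : List ι) (m : M) (f : ι → N) :
    m ⊗ₜ[R] (l.map f).sum = (l.map fun i => m ⊗ₜ[R] f i).sum := by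
  induction l with
  | nil => simp
  | cons i l ih => simp [tmul_add, ih]

end TensorProduct

namespace SweedlerRep

open Coalgebra TensorProduct

section Coalgebra

variable {C H M : Type*} [CommSemiring C] [AddCommMonoid H] [Module C H] [Coalgebra C H]
  [AddCommMonoid M] [Module C M] (Δ : SweedlerRep C H)

theorem map_comul (f : H ⊗[C] H →ₗ[C] M) (g : H) :
    f (comul g) = ((Δ.rep g).map fun p => f (p.1 ⊗ₜ p.2)).sum := by
  rw [Δ.rep_spec, map_list_sum, List.map_map]
  rfl

theorem isCocomm
    (hcocom : ∀ g : H, comul (R := C) g = ((Δ.rep g).map fun p => p.2 ⊗ₜ[C] p.1).sum) :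
    IsCocomm C H where
  comm_comp_comul := by
    ext g
    exact (Δ.map_comul (TensorProduct.comm C H H).toLinearMap g).trans (hcocom g).symm

theorem sum_comm [IsCocomm C H] (f : H ⊗[C] H →ₗ[C] M) (g : H) :
    ((Δ.rep g).map fun p => f (p.2 ⊗ₜ p.1)).sum
      = ((Δ.rep g).map fun p => f (p.1 ⊗ₜ p.2)).sum := by
  rw [← Δ.map_comul, ← comm_comul C g, ← LinearEquiv.coe_coe, ← LinearMap.comp_apply,
    Δ.map_comul]
  rfl

theorem sum_counit_smul (g : H) :
    ((Δ.rep g).map fun p => counit (R := C) p.1 • p.2).sum = g := by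
  simpa [Δ.map_comul] using congr($(lift_lsmul_comp_counit_comp_comul (R := C) (A := H)) g)

theorem sum_sum_coassoc (g : H) :
    ((Δ.rep g).map fun p => ((Δ.rep p.1).map fun q => (q.1 ⊗ₜ[C] q.2) ⊗ₜ[C] p.2).sum).sum
      = ((Δ.rep g).map fun p => ((Δ.rep p.2).map fun q => (p.1 ⊗ₜ[C] q.1) ⊗ₜ[C] q.2).sum).sum := by
  have comul_tmul (x z : H) :
      comul x ⊗ₜ z = ((Δ.rep x).map fun q => (q.1 ⊗ₜ[C] q.2) ⊗ₜ[C] z).sum := by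
    rw [Δ.rep_spec, list_sum_tmul]
  have tmul_comul (x z : H) : (TensorProduct.assoc C H H H).symm (x ⊗ₜ comul z)
      = ((Δ.rep z).map fun q => (x ⊗ₜ[C] q.1) ⊗ₜ[C] q.2).sum :=
    Δ.map_comul ((TensorProduct.assoc C H H H).symm.toLinearMap ∘ₗ TensorProduct.mk C H _ x) z
  have expand_left := Δ.map_comul ((comul (R := C) (A := H)).rTensor H) g
  have expand_right := Δ.map_comul ((TensorProduct.assoc C H H H).symm.toLinearMap ∘ₗ
    (comul (R := C) (A := H)).lTensor H) g
  simp only [LinearMap.rTensor_tmul, comul_tmul] at expand_left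
  simp only [LinearMap.comp_apply, LinearMap.lTensor_tmul, coassoc_symm_apply,
    LinearEquiv.coe_coe, tmul_comul] at expand_right
  rw [← expand_left, expand_right]

end Coalgebra

section HopfAlgebra

variable {C H : Type*} [CommSemiring C] [Semiring H] [HopfAlgebra C H] (Δ : SweedlerRep C H)

open HopfAlgebra

theorem sum_mul_antipode (g : H) :
    ((Δ.rep g).map fun p => p.1 * antipode C p.2).sum = counit (R := C) g • (1 : H) := by
  rw [Algebra.smul_def, mul_one, ← mul_antipode_lTensor_comul_apply]
  exact (Δ.map_comul (LinearMap.mul' C H ∘ₗ (antipode C).lTensor H) g).symm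

theorem sum_snd_mul_antipode_fst [IsCocomm C H] (g : H) :
    ((Δ.rep g).map fun p => p.2 * antipode C p.1).sum = counit (R := C) g • (1 : H) :=
  (Δ.sum_comm (LinearMap.mul' C H ∘ₗ (antipode C).lTensor H) g).trans (Δ.sum_mul_antipode g)

theorem sum_sum_mul_antipode_tmul [IsCocomm C H] (g : H) :
    ((Δ.rep g).map fun p =>
        ((Δ.rep p.2).map fun q => (q.1 * antipode C p.1) ⊗ₜ[C] q.2).sum).sum = 1 ⊗ₜ g := by
  let Ψ : (H ⊗[C] H) ⊗[C] H →ₗ[C] H ⊗[C] H := (LinearMap.mul' C H ∘ₗ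
    (antipode C).lTensor H ∘ₗ (TensorProduct.comm C H H).toLinearMap).rTensor H
  have coassoc := congr(Ψ $(Δ.sum_sum_coassoc g))
  simp only [map_list_sum, List.map_map, Function.comp_def, Ψ, LinearMap.rTensor_tmul,
    LinearMap.comp_apply, LinearEquiv.coe_coe, TensorProduct.comm_tmul, LinearMap.lTensor_tmul,
    LinearMap.mul'_apply] at coassoc
  conv_rhs => rw [← Δ.sum_counit_smul g, tmul_list_sum]
  rw [← coassoc]
  simp only [← list_sum_tmul, Δ.sum_snd_mul_antipode_fst, smul_tmul]

theorem sum_sum_tmul_mul_antipode [IsCocomm C H] (g : H) :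
    ((Δ.rep g).map fun p =>
        ((Δ.rep p.2).map fun q => q.1 ⊗ₜ[C] (q.2 * antipode C p.1)).sum).sum = g ⊗ₜ 1 := by
  have swapped := congr(TensorProduct.comm C H H $(Δ.sum_sum_mul_antipode_tmul g))
  simp only [map_list_sum, List.map_map, Function.comp_def, TensorProduct.comm_tmul] at swapped
  rw [← swapped]
  congr! 3 with p
  exact (Δ.sum_comm ((LinearMap.mulRight C (antipode C p.1)).lTensor H) p.2).symm

end HopfAlgebra

end SweedlerRep

theorem memGL_central_of_cocommutative_general
    {C H A : Type*} [CommRing C]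
    [Ring H] [HopfAlgebra C H]
    [Ring A] [Algebra C A]
    (Δ : SweedlerRep C H)
    -- `H` is cocommutative: `Δ = Δ^op`
    (hcocom : ∀ g : H, Coalgebra.comul (R := C) g
      = ((Δ.rep g).map fun p => p.2 ⊗ₜ[C] p.1).sum)
    -- `act` is a `*`-action of `H` on the unital `*`-algebra `A`
    (act : H → A → A)
    (hact_one : ∀ a, act 1 a = a)
    (hact_mulH : ∀ g h a, act (g * h) a = act g (act h a))
    (hact_lin : ∀ a : A, IsLinearMap C fun g => act g a)
    -- `a ∈ GL(H, A)`
    (a : H → A) (ha : memGL Δ act a) :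
    ∀ (g : H) (b : A), a g * b = b * a g := by
  obtain ⟨ha_lin, -, -, hmod⟩ := ha
  have := Δ.isCocomm hcocom
  intro g b
  let aL : H →ₗ[C] A := IsLinearMap.mk' a ha_lin
  let actL : H →ₗ[C] A := IsLinearMap.mk' (act · b) (hact_lin b)
  have left :=
    congr(LinearMap.mul' C A (TensorProduct.map actL aL $(Δ.sum_sum_mul_antipode_tmul g)))
  have right :=
    congr(LinearMap.mul' C A (TensorProduct.map aL actL $(Δ.sum_sum_tmul_mul_antipode g)))
  simp only [map_list_sum, List.map_map, Function.comp_def, TensorProduct.map_tmul,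
    LinearMap.mul'_apply, IsLinearMap.mk'_apply, aL, actL, hact_mulH, hact_one] at left right
  rw [← left, ← right]
  simp only [hmod]

/-- For a cocommutative Hopf `*`-algebra `H` acting on a unital
`*`-algebra `A`, every element `a ∈ GL(H, A)` takes values in the center of `A`. -/
theorem memGL_central_of_cocommutative
    {C H A : Type*} [CommRing C] [StarRing C]
    [Ring H] [HopfAlgebra C H] [StarRing H] [StarModule C H]
    [Ring A] [Algebra C A] [StarRing A] [StarModule C A]
    (Δ : SweedlerRep C H)
    -- `H` is cocommutative: `Δ = Δ^op`
    (hcocom : ∀ g : H, Coalgebra.comul (R := C) g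
      = ((Δ.rep g).map fun p => p.2 ⊗ₜ[C] p.1).sum)
    -- `act` is a `*`-action of `H` on the unital `*`-algebra `A`
    (act : H → A → A)
    (hact_one : ∀ a, act 1 a = a)
    (hact_mulH : ∀ g h a, act (g * h) a = act g (act h a))
    (hact_lin : ∀ a : A, IsLinearMap C fun g => act g a)
    (hact_linA : ∀ g : H, IsLinearMap C (act g))
    (hact_alg : ∀ (g : H) (a b : A), act g (a * b) =
      ((Δ.rep g).map fun p => act p.1 a * act p.2 b).sum)
    (hact_star : ∀ g a, star (act g a) =
      act (star (HopfAlgebra.antipode (R := C) g)) (star a))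
    (hact_unit : ∀ g : H, act g (1 : A) = Coalgebra.counit (R := C) g • (1 : A))
    -- `a ∈ GL(H, A)`
    (a : H → A) (ha : memGL Δ act a) :
    ∀ (g : H) (b : A), a g * b = b * a g :=
  memGL_central_of_cocommutative_general Δ hcocom act hact_one hact_mulH hact_lin a ha
end
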